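/- arXiv:2007.09719 — 9 statements merged into one kernel-verified Lean document; each statement's English description precedes it below -/
import Mathlib

section
/- If n is even, then no family of n−1 odd cycles can form a pruned cactus, because the cardinality of any pruned cactus consisting solely of odd cycles is even. -/
/-- The set of vertices incident to an edge set. -/
def edgeVerts {V : Type*} (S : Set (Sym2 V)) : Set V := {v | ∃ e ∈ S, v ∈ e}

/-- The union of a multiset family of edge sets. -/
def famUnion {α : Type*} (F : Multiset (Finset α)) : Set α := {e | ∃ S ∈ F, e ∈ S}

/-- `C` is the edge set of a cycle (of length ≥ 3) in the complete graph on `V`. -/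
def IsCycleEdgeSet {V : Type*} [DecidableEq V] (C : Finset (Sym2 V)) : Prop :=
  ∃ (v : V) (w : (⊤ : SimpleGraph V).Walk v v), w.IsCycle ∧ w.edges.toFinset = C

/-- `C` is the edge set of an odd cycle. -/
def IsOddCycleEdgeSet {V : Type*} [DecidableEq V] (C : Finset (Sym2 V)) : Prop :=
  IsCycleEdgeSet C ∧ Odd C.card

/-- `R` is a rainbow set for the indexed family `F`. -/
def IsRainbow {α ι : Type*} (F : ι → Finset α) (R : Finset α) : Prop :=
  ∃ σ : α → ι, Set.InjOn σ ↑R ∧ ∀ e ∈ R, e ∈ F (σ e)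

/-- `R` is a rainbow set for the multiset family `F`:
each element of `R` is assigned a member of `F` containing it, members being
used with multiplicity at most their multiplicity in `F`. -/
def IsRainbowM {α : Type*} (F : Multiset (Finset α)) (R : Finset α) : Prop :=
  ∃ f : α → Finset α, Multiset.map f R.val ≤ F ∧ ∀ e ∈ R, e ∈ f e

/-- A family of cycles is a pruned cactus. -/
inductive IsPrunedCactus {V : Type*} [DecidableEq V] : Multiset (Finset (Sym2 V)) → Prop
  | base (O : Multiset (Finset (Sym2 V))) (C : Finset (Sym2 V)) :
      IsCycleEdgeSet C → C.card = Multiset.card O + 1 →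
      (∀ D ∈ O, D = C) → IsPrunedCactus O
  | glue (O₁ O₂ : Multiset (Finset (Sym2 V))) :
      IsPrunedCactus O₁ → IsPrunedCactus O₂ →
      (∃ v, edgeVerts (famUnion O₁) ∩ edgeVerts (famUnion O₂) = {v}) →
      IsPrunedCactus (O₁ + O₂)

namespace IsPrunedCactus

variable {V : Type*} [DecidableEq V] {O : Multiset (Finset (Sym2 V))}

theorem nonempty (h : IsPrunedCactus O) : Nonempty V := by
  cases h with
  | base _ _ hC => exact ⟨hC.choose⟩
  | glue _ _ _ _ hv => exact ⟨hv.choose⟩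

/-- A base block consists of `k` copies of a cycle of length `k + 1`, so `k` is even when the cycle
is odd; gluing adds cardinalities. -/
theorem even_card_of_forall_odd (h : IsPrunedCactus O) (hodd : ∀ C ∈ O, Odd C.card) :
    Even (Multiset.card O) := by
  induction h with
  | base O C _ hcard hall =>
    rcases Multiset.empty_or_exists_mem O with rfl | ⟨D, hD⟩
    · exact .zero
    · have hC : Odd (Multiset.card O + 1) := hcard ▸ hall D hD ▸ hodd D hD
      exact Nat.not_odd_iff_even.mp (Nat.odd_add_one.mp hC)
  | glue O₁ O₂ _ _ _ ih₁ ih₂ =>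
    rw [Multiset.card_add]
    exact (ih₁ fun C hC => hodd C (Multiset.mem_add.mpr (.inl hC))).add
      (ih₂ fun C hC => hodd C (Multiset.mem_add.mpr (.inr hC)))

end IsPrunedCactus

/-- If `n` is even, no family of `n - 1` odd cycles is a pruned cactus. -/
theorem not_prunedCactus_of_even (n : ℕ) (hn : Even n)
    (O : Multiset (Finset (Sym2 (Fin n))))
    (hcard : Multiset.card O = n - 1)
    (hodd : ∀ C ∈ O, IsOddCycleEdgeSet C) :
    ¬ IsPrunedCactus O := by
  intro h
  -- Without `0 < n` the parity argument fails: `n - 1` truncates to `0` when `n = 0`.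
  have hpos : 0 < n := h.nonempty.some.pos
  have heven : Even (n - 1) := hcard ▸ h.even_card_of_forall_odd fun C hC => (hodd C hC).2
  obtain ⟨k, hk⟩ := hn
  obtain ⟨m, hm⟩ := heven
  omega
end

section
/- For every pruned cactus 𝒪 of cycles, the underlying graph ⋃𝒪 has exactly |𝒪|+1 vertices, and 𝒪 has no rainbow cycle. -/
/-! A cycle has as many vertices as edges, so the vertex count follows from inclusion–exclusion
at the gluing vertex. A cycle whose edges lie on a cycle `C` is `C` itself, because every vertex
has degree two in both; so in the base case a rainbow cycle, having at most `|𝒪| < |C|` edges,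
cannot exist. When `𝒪₁` and `𝒪₂` are glued at `v`, no cycle belongs to both (it would have at
most one vertex), and the edges of a rainbow cycle coloured by `𝒪₁` and by `𝒪₂` share no vertex
other than `v`. Going once around the cycle from `v`, consecutive edges meet at vertices other
than `v`, hence all get colours from the same side, and induction applies there. -/

theorem Multiset.le_of_le_add_of_forall_notMem {α : Type*} {s t u : Multiset α} (h : s ≤ t + u)
    (hs : ∀ a ∈ s, a ∉ u) : s ≤ t := by
  classical
  refine Multiset.le_iff_count.mpr fun a => ?_
  by_cases ha : a ∈ s
  · simpa [Multiset.count_eq_zero.mpr (hs a ha)] using Multiset.le_iff_count.mp h a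
  · simp [Multiset.count_eq_zero.mpr ha]

section EdgeVerts

variable {V : Type*}

theorem edgeVerts_mono {A B : Set (Sym2 V)} (h : A ⊆ B) : edgeVerts A ⊆ edgeVerts B :=
  fun _ ⟨e, he, hx⟩ => ⟨e, h he, hx⟩

theorem edgeVerts_union (A B : Set (Sym2 V)) :
    edgeVerts (A ∪ B) = edgeVerts A ∪ edgeVerts B := by
  ext x
  simp only [edgeVerts, Set.mem_union, Set.mem_ofPred_eq, or_and_right, exists_or]

end EdgeVerts

section FamUnion

variable {α : Type*} {F F₁ F₂ : Multiset (Finset α)}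

theorem famUnion_add : famUnion (F₁ + F₂) = famUnion F₁ ∪ famUnion F₂ := by
  ext x
  simp only [famUnion, Multiset.mem_add, Set.mem_union, Set.mem_ofPred_eq, or_and_right,
    exists_or]

theorem coe_subset_famUnion {D : Finset α} (hD : D ∈ F) : (D : Set α) ⊆ famUnion F :=
  fun _ hx => ⟨D, hD, hx⟩

theorem famUnion_subset {S : Set α} (h : ∀ D ∈ F, ↑D ⊆ S) : famUnion F ⊆ S :=
  fun _ ⟨D, hD, hx⟩ => h D hD hx

theorem famUnion_eq_of_forall_eq {C : Finset α} (hF : F ≠ 0) (h : ∀ D ∈ F, D = C) :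
    famUnion F = C := by
  obtain ⟨D, hD⟩ := Multiset.exists_mem_of_ne_zero hF
  exact subset_antisymm (famUnion_subset fun D hD => (h D hD).le)
    (h D hD ▸ coe_subset_famUnion hD)

end FamUnion

namespace IsRainbowM

variable {α : Type*} {F : Multiset (Finset α)} {R : Finset α}

theorem card_le (hR : IsRainbowM F R) : R.card ≤ Multiset.card F := by
  obtain ⟨f, hle, -⟩ := hR
  simpa using Multiset.card_le_card hle

theorem subset_famUnion (hR : IsRainbowM F R) : ↑R ⊆ famUnion F := by
  obtain ⟨f, hle, hf⟩ := hR
  exact fun e he => ⟨f e, Multiset.mem_of_le hle (Multiset.mem_map_of_mem f he), hf e he⟩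

end IsRainbowM

open SimpleGraph

namespace SimpleGraph.Walk

variable {V : Type*} {G : SimpleGraph V} {A B : Set (Sym2 V)} {u u' v₀ : V}

theorem forall_mem_edges_left_of_cut (hcut : edgeVerts A ∩ edgeVerts B ⊆ {v₀}) :
    ∀ {x w : V} (q : G.Walk x w) {e₀ : Sym2 V}, x ∈ e₀ → e₀ ∈ A → v₀ ∉ q.support.dropLast →
      (∀ e ∈ q.edges, e ∈ A ∨ e ∈ B) → ∀ e ∈ q.edges, e ∈ A
  | _, _, .nil, _, _, _, _, _ => by simp
  | x, _, .cons (v := y) _ q, e₀, hx, he₀, hv₀, hAB => by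
    rw [support_cons, List.dropLast_cons_of_ne_nil q.support_ne_nil, List.mem_cons,
      not_or] at hv₀
    have hxy : s(x, y) ∈ A := by
      refine (hAB _ List.mem_cons_self).resolve_right fun hB => hv₀.1 ?_
      exact (hcut ⟨⟨e₀, he₀, hx⟩, ⟨s(x, y), hB, Sym2.mem_mk_left x y⟩⟩).symm
    have ih := forall_mem_edges_left_of_cut hcut q (Sym2.mem_mk_right x y) hxy hv₀.2
      fun e he => hAB e (List.mem_cons_of_mem _ he)
    simpa [edges_cons, hxy] using ih

theorem IsCycle.notMem_dropLast_tail_support {c : G.Walk u u} (hc : c.IsCycle) :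
    u ∉ c.support.tail.dropLast := by
  have hnd := hc.support_nodup
  rw [← support_tail_of_not_nil c hc.not_nil] at hnd ⊢
  rw [← c.tail.dropLast_support_concat, List.nodup_append] at hnd
  exact fun hu => by simpa using hnd.2.2 u hu

theorem IsCycle.forall_mem_edges_or_of_cut {c : G.Walk u u} (hc : c.IsCycle)
    (hcut : edgeVerts A ∩ edgeVerts B ⊆ {v₀}) (hAB : ∀ e ∈ c.edges, e ∈ A ∨ e ∈ B) :
    (∀ e ∈ c.edges, e ∈ A) ∨ (∀ e ∈ c.edges, e ∈ B) := by
  suffices key : ∀ {w : V} (c : G.Walk w w), c.IsCycle → v₀ ∉ c.support.tail.dropLast →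
      (∀ e ∈ c.edges, e ∈ A ∨ e ∈ B) → (∀ e ∈ c.edges, e ∈ A) ∨ (∀ e ∈ c.edges, e ∈ B) by
    classical
    by_cases hv₀ : v₀ ∈ c.support
    · simp only [← (c.rotate_edges v₀ hv₀).mem_iff] at hAB ⊢
      exact key _ (hc.rotate hv₀) (hc.rotate hv₀).notMem_dropLast_tail_support hAB
    · exact key c hc (fun h => hv₀ (List.mem_of_mem_tail (List.mem_of_mem_dropLast h))) hAB
  intro w c hc hv₀ hAB
  cases c with
  | nil => exact absurd hc not_isCycle_nil
  | cons h q =>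
    rw [support_cons, List.tail_cons] at hv₀
    simp only [edges_cons, List.forall_mem_cons] at hAB ⊢
    rcases hAB.1 with hA | hB
    · exact .inl ⟨hA, q.forall_mem_edges_left_of_cut hcut (Sym2.mem_mk_right _ _) hA hv₀ hAB.2⟩
    · refine .inr ⟨hB, q.forall_mem_edges_left_of_cut (Set.inter_comm _ _ ▸ hcut)
        (Sym2.mem_mk_right _ _) hB hv₀ fun e he => (hAB.2 e he).symm⟩

theorem IsCycle.neighborSet_toSubgraph_eq_of_edges_subset {c : G.Walk u u} {c' : G.Walk u' u'}
    (hc : c.IsCycle) (hc' : c'.IsCycle) (h : ∀ e ∈ c'.edges, e ∈ c.edges) {x : V}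
    (hx : x ∈ c'.support) : c'.toSubgraph.neighborSet x = c.toSubgraph.neighborSet x := by
  have hxc : x ∈ c.support := by
    obtain ⟨e, he, hxe⟩ := (mem_support_iff_exists_mem_edges_of_not_nil hc'.not_nil).mp hx
    exact (mem_support_iff_exists_mem_edges_of_not_nil hc.not_nil).mpr ⟨e, h e he, hxe⟩
  refine Set.eq_of_subset_of_ncard_le (fun y hy => ?_) ?_ c.finite_neighborSet_toSubgraph
  · exact adj_toSubgraph_iff_mem_edges.mpr (h _ (adj_toSubgraph_iff_mem_edges.mp hy))
  · rw [hc.ncard_neighborSet_toSubgraph_eq_two hxc, hc'.ncard_neighborSet_toSubgraph_eq_two hx]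

theorem IsCycle.forall_mem_edges_of_edges_subset {c : G.Walk u u} {c' : G.Walk u' u'}
    (hc : c.IsCycle) (hc' : c'.IsCycle) (h : ∀ e ∈ c'.edges, e ∈ c.edges) :
    ∀ e ∈ c.edges, e ∈ c'.edges := by
  set A : Set (Sym2 V) := {e | e ∈ c'.edges}
  set B : Set (Sym2 V) := {e | e ∈ c.edges ∧ e ∉ c'.edges}
  -- A vertex on an edge of `c'` and on an edge of `c` outside `c'` would have three
  -- neighbours in `c`, so the cut is even empty.
  have hcut : edgeVerts A ∩ edgeVerts B ⊆ {u} := by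
    rintro x ⟨⟨e', he', hxe'⟩, ⟨e, ⟨he, hne⟩, hxe⟩⟩
    have hx : x ∈ c'.support := (mem_support_iff_exists_mem_edges_of_not_nil hc'.not_nil).mpr
      ⟨e', he', hxe'⟩
    obtain ⟨y, rfl⟩ := Sym2.mem_iff_exists.mp hxe
    have hy : y ∈ c.toSubgraph.neighborSet x := adj_toSubgraph_iff_mem_edges.mpr he
    rw [← hc.neighborSet_toSubgraph_eq_of_edges_subset hc' h hx] at hy
    exact absurd (adj_toSubgraph_iff_mem_edges.mp hy) hne
  rcases hc.forall_mem_edges_or_of_cut hcut (fun e he => (em (e ∈ c'.edges)).imp id (⟨he, ·⟩))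
    with hA | hB
  · exact hA
  · obtain ⟨e, he⟩ := List.exists_mem_of_ne_nil _ (edges_eq_nil.not.mpr hc'.not_nil)
    exact absurd he (hB e (h e he)).2

theorem IsCycle.edgeVerts_edges {c : G.Walk u u} (hc : c.IsCycle) :
    edgeVerts {e | e ∈ c.edges} = {x | x ∈ c.support.tail} := by
  ext x
  change (∃ e ∈ c.edges, x ∈ e) ↔ x ∈ c.support.tail
  rw [← mem_support_iff_exists_mem_edges_of_not_nil hc.not_nil, mem_support_iff,
    or_iff_right_iff_imp]
  rintro rfl
  exact end_mem_tail_support hc.not_nil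

theorem IsCycle.ncard_edgeVerts_edges [DecidableEq V] {c : G.Walk u u} (hc : c.IsCycle) :
    (edgeVerts {e | e ∈ c.edges}).ncard = c.length := by
  rw [hc.edgeVerts_edges, ← List.coe_toFinset, Set.ncard_coe_finset,
    List.toFinset_card_of_nodup hc.support_nodup, List.length_tail, length_support,
    Nat.add_sub_cancel]

end SimpleGraph.Walk

namespace IsCycleEdgeSet

variable {V : Type*} [DecidableEq V] {C R : Finset (Sym2 V)}

theorem ncard_edgeVerts (hC : IsCycleEdgeSet C) :
    (edgeVerts (C : Set (Sym2 V))).ncard = C.card := by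
  obtain ⟨u, c, hc, rfl⟩ := hC
  rw [List.coe_toFinset, hc.ncard_edgeVerts_edges, List.toFinset_card_of_nodup hc.edges_nodup,
    Walk.length_edges]

theorem three_le_card (hC : IsCycleEdgeSet C) : 3 ≤ C.card := by
  obtain ⟨u, c, hc, rfl⟩ := hC
  rw [List.toFinset_card_of_nodup hc.edges_nodup, Walk.length_edges]
  exact hc.three_le_length

theorem eq_of_subset (hR : IsCycleEdgeSet R) (hC : IsCycleEdgeSet C) (h : R ⊆ C) : R = C := by
  obtain ⟨u, r, hr, rfl⟩ := hR
  obtain ⟨u', c, hc, rfl⟩ := hC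
  refine Finset.Subset.antisymm h fun e he => List.mem_toFinset.mpr ?_
  exact hc.forall_mem_edges_of_edges_subset hr (fun e he => List.mem_toFinset.mp
    (h (List.mem_toFinset.mpr he))) e (List.mem_toFinset.mp he)

theorem subset_or_subset_of_cut (hC : IsCycleEdgeSet C) {A B : Set (Sym2 V)} {v₀ : V}
    (hcut : edgeVerts A ∩ edgeVerts B ⊆ {v₀}) (hAB : ↑C ⊆ A ∪ B) : ↑C ⊆ A ∨ ↑C ⊆ B := by
  obtain ⟨u, c, hc, rfl⟩ := hC
  simp only [List.coe_toFinset] at hAB ⊢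
  exact hc.forall_mem_edges_or_of_cut hcut hAB

end IsCycleEdgeSet

section Cactus

variable {V : Type*} [DecidableEq V] {O O₁ O₂ : Multiset (Finset (Sym2 V))} {R : Finset (Sym2 V)}

theorem IsRainbowM.left_or_right_of_cut (hR : IsRainbowM (O₁ + O₂) R) (hRc : IsCycleEdgeSet R)
    (hdisj : Disjoint O₁ O₂) {v : V}
    (hcut : edgeVerts (famUnion O₁) ∩ edgeVerts (famUnion O₂) ⊆ {v}) :
    IsRainbowM O₁ R ∨ IsRainbowM O₂ R := by
  obtain ⟨f, hle, hf⟩ := hR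
  have hmem : ∀ e ∈ R, f e ∈ O₁ + O₂ := fun e he =>
    Multiset.mem_of_le hle (Multiset.mem_map_of_mem f he)
  let A : Set (Sym2 V) := {e | e ∈ R ∧ f e ∈ O₁}
  let B : Set (Sym2 V) := {e | e ∈ R ∧ f e ∈ O₂}
  have hA : A ⊆ famUnion O₁ := fun e he => ⟨f e, he.2, hf e he.1⟩
  have hB : B ⊆ famUnion O₂ := fun e he => ⟨f e, he.2, hf e he.1⟩
  have hcutAB : edgeVerts A ∩ edgeVerts B ⊆ {v} :=
    (Set.inter_subset_inter (edgeVerts_mono hA) (edgeVerts_mono hB)).trans hcut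
  rcases hRc.subset_or_subset_of_cut hcutAB
    (fun e he => (Multiset.mem_add.mp (hmem e he)).imp (⟨he, ·⟩) (⟨he, ·⟩)) with hRA | hRB
  · refine .inl ⟨f, Multiset.le_of_le_add_of_forall_notMem hle ?_, hf⟩
    simp only [Multiset.mem_map, forall_exists_index, and_imp, forall_apply_eq_imp_iff₂]
    exact fun e he => Multiset.disjoint_left.mp hdisj (hRA he).2
  · refine .inr ⟨f, Multiset.le_of_le_add_of_forall_notMem (add_comm O₁ O₂ ▸ hle) ?_, hf⟩
    simp only [Multiset.mem_map, forall_exists_index, and_imp, forall_apply_eq_imp_iff₂]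
    exact fun e he => Multiset.disjoint_right.mp hdisj (hRB he).2

namespace IsPrunedCactus

theorem isCycleEdgeSet_of_mem (h : IsPrunedCactus O) : ∀ D ∈ O, IsCycleEdgeSet D := by
  induction h with
  | base O C hC _ hO => exact fun D hD => hO D hD ▸ hC
  | glue O₁ O₂ _ _ _ ih₁ ih₂ =>
    exact fun D hD => (Multiset.mem_add.mp hD).elim (ih₁ D) (ih₂ D)

theorem disjoint_of_glue (h₁ : IsPrunedCactus O₁) {v : V}
    (hv : edgeVerts (famUnion O₁) ∩ edgeVerts (famUnion O₂) = {v}) : Disjoint O₁ O₂ := by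
  refine Multiset.disjoint_left.mpr fun {D} hD₁ hD₂ => ?_
  have hD := h₁.isCycleEdgeSet_of_mem D hD₁
  have hsub : edgeVerts (D : Set (Sym2 V)) ⊆ {v} := hv ▸ Set.subset_inter
    (edgeVerts_mono (coe_subset_famUnion hD₁)) (edgeVerts_mono (coe_subset_famUnion hD₂))
  have := Set.ncard_le_ncard hsub
  rw [Set.ncard_singleton, hD.ncard_edgeVerts] at this
  linarith [hD.three_le_card]

theorem ncard_edgeVerts_famUnion (h : IsPrunedCactus O) :
    (edgeVerts (famUnion O)).ncard = Multiset.card O + 1 := by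
  induction h with
  | base O C hC hcard hO =>
    have hO0 : O ≠ 0 := by
      rintro rfl
      have := hC.three_le_card
      simp only [Multiset.card_zero] at hcard
      omega
    rw [famUnion_eq_of_forall_eq hO0 hO, hC.ncard_edgeVerts, hcard]
  | glue O₁ O₂ _ _ hv ih₁ ih₂ =>
    obtain ⟨v, hv⟩ := hv
    have hfin : ∀ {O : Multiset (Finset (Sym2 V))},
        (edgeVerts (famUnion O)).ncard = Multiset.card O + 1 → (edgeVerts (famUnion O)).Finite :=
      fun h => Set.finite_of_ncard_ne_zero (by omega)
    have := Set.ncard_union_add_ncard_inter _ _ (hfin ih₁) (hfin ih₂)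
    rw [hv, Set.ncard_singleton, ih₁, ih₂] at this
    rw [famUnion_add, edgeVerts_union, Multiset.card_add]
    omega

theorem not_isRainbowM (h : IsPrunedCactus O) (hR : IsCycleEdgeSet R) : ¬ IsRainbowM O R := by
  induction h with
  | base O C hC hcard hO =>
    intro hRO
    have hRC : R ⊆ C := Finset.coe_subset.mp
      (hRO.subset_famUnion.trans (famUnion_subset fun D hD => (hO D hD).le))
    have := hRO.card_le
    rw [hR.eq_of_subset hC hRC] at this
    omega
  | glue O₁ O₂ h₁ _ hv ih₁ ih₂ =>
    obtain ⟨v, hv⟩ := hv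
    exact fun hRO => (hRO.left_or_right_of_cut hR (h₁.disjoint_of_glue hv) hv.subset).elim ih₁ ih₂

end IsPrunedCactus

end Cactus

/-- A pruned cactus `O` has exactly `|O| + 1` vertices in its underlying graph,
and has no rainbow cycle. -/
theorem prunedCactus_card_and_no_rainbow_cycle {V : Type*} [DecidableEq V]
    (O : Multiset (Finset (Sym2 V))) (h : IsPrunedCactus O) :
    (edgeVerts (famUnion O)).ncard = Multiset.card O + 1 ∧
      ¬ ∃ R : Finset (Sym2 V), IsRainbowM O R ∧ IsCycleEdgeSet R :=
  ⟨h.ncard_edgeVerts_famUnion, fun ⟨_, hRO, hR⟩ => h.not_isRainbowM hR hRO⟩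
end

section
/- Let E be a ground set and 𝒫 ⊆ 2^E a property not containing the empty set and closed under taking supersets. Let m be the maximum size of a subset of E not in 𝒫. Then every family E₁, …, E_{m+1} of subsets of E with each Eᵢ ∈ 𝒫 has a rainbow set in 𝒫. -/
/-! Greedy colouring: while a rainbow set `R` is smaller than the number of colours, some colour
`i` is unused, and if `E i ⊄ R` any `e ∈ E i \ R` can be added with colour `i`. Starting from `∅`,
this either reaches `m + 1` elements, beyond the size of any set outside `P`, or gets stuck at a
rainbow set `R` containing some `E i`, which is in `P` by upward closure. -/

theorem IsRainbow.empty {α ι : Type*} [Nonempty ι] (E : ι → Finset α) : IsRainbow E ∅ :=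
  ⟨fun _ => Classical.arbitrary ι, by simp, by simp⟩

theorem IsRainbow.exists_insert {α ι : Type*} [DecidableEq α] [Fintype ι] {E : ι → Finset α}
    {R : Finset α} (hR : IsRainbow E R) (hcard : R.card < Fintype.card ι)
    (hE : ∀ i, ¬ E i ⊆ R) : ∃ e ∉ R, IsRainbow E (insert e R) := by
  classical
  obtain ⟨σ, hinj, hσ⟩ := hR
  obtain ⟨i, -, hi⟩ : ∃ i ∈ Finset.univ, i ∉ R.image σ :=
    Finset.exists_mem_notMem_of_card_lt_card (Finset.card_image_le.trans_lt hcard)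
  obtain ⟨e, he, heR⟩ := Finset.not_subset.1 (hE i)
  have hσR : Set.EqOn σ (Function.update σ e i) R := fun x hx =>
    (Function.update_of_ne (by rintro rfl; exact heR hx) _ _).symm
  refine ⟨e, heR, Function.update σ e i, ?_, ?_⟩
  · rw [Finset.coe_insert, Set.injOn_insert (by simpa using heR), ← hσR.image_eq,
      Function.update_self]
    exact ⟨hinj.congr hσR, by simpa using hi⟩
  · intro x hx
    rcases Finset.mem_insert.1 hx with rfl | hx
    · rwa [Function.update_self]
    · rw [← hσR hx]
      exact hσ x hx

theorem exists_rainbow_of_card_le {α ι : Type*} [Fintype ι] [Nonempty ι] {P : Finset α → Prop}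
    (hup : ∀ F F' : Finset α, P F → F ⊆ F' → P F') {E : ι → Finset α} (hE : ∀ i, P (E i))
    {k : ℕ} (hk : k ≤ Fintype.card ι) : ∃ R : Finset α, IsRainbow E R ∧ (P R ∨ R.card = k) := by
  classical
  induction k with
  | zero => exact ⟨∅, IsRainbow.empty E, Or.inr rfl⟩
  | succ k ih =>
    obtain ⟨R, hR, hPR | hRk⟩ := ih (Nat.le_of_succ_le hk)
    · exact ⟨R, hR, Or.inl hPR⟩
    by_cases hsub : ∃ i, E i ⊆ R
    · obtain ⟨i, hi⟩ := hsub
      exact ⟨R, hR, Or.inl (hup _ _ (hE i) hi)⟩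
    obtain ⟨e, heR, hR'⟩ := hR.exists_insert (hRk ▸ hk) (not_exists.1 hsub)
    exact ⟨insert e R, hR', Or.inr (by rw [Finset.card_insert_of_notMem heR, hRk])⟩

theorem rainbow_of_upward_closed_general {α : Type*} (P : Finset α → Prop)
    (hup : ∀ F F' : Finset α, P F → F ⊆ F' → P F')
    (m : ℕ) (hm : IsGreatest {k | ∃ F : Finset α, ¬ P F ∧ F.card = k} m)
    (E : Fin (m + 1) → Finset α) (hE : ∀ i, P (E i)) :
    ∃ R : Finset α, IsRainbow E R ∧ P R := by
  obtain ⟨R, hR, hPR | hcard⟩ := exists_rainbow_of_card_le hup hE (Fintype.card_fin (m + 1)).ge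
  · exact ⟨R, hR, hPR⟩
  refine ⟨R, hR, by_contra fun hPR => ?_⟩
  have : m + 1 ≤ m := hm.2 ⟨R, hPR, hcard⟩
  omega

/-- If `P` is an upward-closed property of subsets of a ground set, not containing `∅`,
and `m` is the maximum size of a set not in `P`, then any `m + 1` sets in `P` have a
rainbow set in `P`. -/
theorem rainbow_of_upward_closed {α : Type*} (P : Finset α → Prop)
    (h0 : ¬ P ∅) (hup : ∀ F F' : Finset α, P F → F ⊆ F' → P F')
    (m : ℕ) (hm : IsGreatest {k | ∃ F : Finset α, ¬ P F ∧ F.card = k} m)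
    (E : Fin (m + 1) → Finset α) (hE : ∀ i, P (E i)) :
    ∃ R : Finset α, IsRainbow E R ∧ P R :=
  rainbow_of_upward_closed_general P hup m hm E hE
end

section
/- Let v be a vertex of K_{m+1} and ℰ = {E₁, …, E_m} a family of subgraphs of K_{m+1} where each Eᵢ is either a star centered at v or a cycle. Suppose ℰ has no rainbow cycle and every star in ℰ is edge-disjoint from all other members of ℰ. If E₁ is a star, then there exist ℓ cycles in ℰ avoiding v, for some 0 < ℓ < m, whose union with E₁ contains at most ℓ+2 vertices. -/
/-- `S` is a star of size at least 2 centered at `v`. -/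
def IsStar {V : Type*} (v : V) (S : Finset (Sym2 V)) : Prop :=
  2 ≤ S.card ∧ ∀ e ∈ S, ¬ e.IsDiag ∧ v ∈ e

/-!
Choosing edges `e i ∈ E i` greedily gives a rainbow forest: if every edge of the next member
closed a cycle with the forest, either one of them is a new edge, and its fundamental cycle is
rainbow, or the member lies inside the forest, which disjointness forbids for a star and
acyclicity for a cycle. Having `m` edges on `m + 1` vertices, the forest is a spanning tree.

Root the tree at `v` and, among all rainbow spanning trees, take one minimising the set `D` of
vertices below the edge `s(v, a)` it picks from the star `E₁`. The fundamental cycles of the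
other star edges pass through `s(v, a)`, so all leaves of the star lie in `D` and `|D| ≥ 2`.
Let `J` index the `|D| - 1` tree edges inside `D`. For `j ∈ J`, a tree edge of `E j` is not
`s(v, a)`, so it cannot separate `D` from its complement, and a non-tree edge of `E j` leaving
`D` could replace `e j` and shrink `D`. Hence `E j` is a cycle inside `D`, and together with
the star the chosen members span at most `|D| + 1 = |J| + 2` vertices.
-/

open Function

namespace SimpleGraph

variable {V : Type*} {G : SimpleGraph V}

lemma IsAcyclic.isTree_of_ncard [Finite V] [Nonempty V] (hG : G.IsAcyclic)
    (h : G.edgeSet.ncard + 1 = Nat.card V) : G.IsTree := by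
  obtain ⟨T, hGT, -, hT⟩ := connected_top.exists_isTree_le_of_le_of_isAcyclic le_top hG
  have hT_card := (isTree_iff_connected_and_card.1 hT).2
  rw [Nat.card_coe_set_eq] at hT_card
  have hGT_edges : G.edgeSet = T.edgeSet :=
    Set.eq_of_subset_of_ncard_le (edgeSet_mono hGT) (by omega)
  rwa [edgeSet_inj.1 hGT_edges]

lemma Walk.mem_iff_of_forall_edges {D : Set V} {x y : V}
    (p : G.Walk x y) (hD : ∀ a b, s(a, b) ∈ p.edges → (a ∈ D ↔ b ∈ D)) :
    ∀ u ∈ p.support, (u ∈ D ↔ x ∈ D) := by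
  induction p with
  | nil => simp
  | cons h q ih =>
    simp only [Walk.edges_cons, List.mem_cons] at hD
    intro u hu
    rw [Walk.support_cons, List.mem_cons] at hu
    rcases hu with rfl | hu
    · rfl
    · exact (ih (fun a b hab => hD a b (Or.inr hab)) u hu).trans (hD _ _ (Or.inl rfl)).symm

def subtreeBelow (G : SimpleGraph V) (r : V) (g : Sym2 V) : Set V :=
  {u | ∃ p : G.Walk u r, p.IsPath ∧ g ∈ p.edges}

lemma root_notMem_subtreeBelow (r : V) (g : Sym2 V) : r ∉ G.subtreeBelow r g := by
  rintro ⟨p, hp, hg⟩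
  simp [Walk.isPath_iff_nil.1 hp |>.eq_nil] at hg

namespace IsTree

variable [DecidableEq V] (hT : G.IsTree) {r u w x y : V} {g : Sym2 V}
include hT

noncomputable def path (u w : V) : G.Walk u w :=
  (hT.connected.preconnected u w).some.toPath

lemma isPath_path (u w : V) : (hT.path u w).IsPath :=
  (Walk.toPath _).2

lemma eq_path {p : G.Walk u w} (hp : p.IsPath) : p = hT.path u w :=
  congrArg Subtype.val
    ((hT.isAcyclic.subsingleton_path u w).elim ⟨p, hp⟩ ⟨_, hT.isPath_path u w⟩)

lemma mem_subtreeBelow_iff : u ∈ G.subtreeBelow r g ↔ g ∈ (hT.path u r).edges :=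
  ⟨fun ⟨_, hp, hg⟩ => hT.eq_path hp ▸ hg, fun hg => ⟨_, hT.isPath_path u r, hg⟩⟩

lemma notMem_subtreeBelow_of_walk (p : G.Walk u r) (hg : g ∉ p.edges) :
    u ∉ G.subtreeBelow r g := by
  rw [hT.mem_subtreeBelow_iff, ← hT.eq_path p.toPath.2]
  exact fun h => hg (p.edges_toPath_subset_edges h)

lemma path_eq_cons (h : G.Adj u w) (hu : u ∉ (hT.path w r).support) :
    hT.path u r = Walk.cons h (hT.path w r) :=
  (hT.eq_path ((Walk.cons_isPath_iff _ _).2 ⟨hT.isPath_path w r, hu⟩)).symm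

lemma mem_subtreeBelow_iff_of_adj (h : G.Adj x y) :
    (x ∈ G.subtreeBelow r g ↔ y ∈ G.subtreeBelow r g) ↔ g ≠ s(x, y) := by
  wlog hx : x ∉ (hT.path y r).support generalizing x y
  · have hy : y ∉ (hT.path x r).support := by
      simpa using hT.isAcyclic.ne_mem_support_of_support_of_adj_of_isPath
        (hT.isPath_path y r).reverse (hT.isPath_path x r).reverse h.symm (by simpa using hx)
    rw [Sym2.eq_swap, ← this h.symm hy]
    exact Iff.comm
  have hxy : s(x, y) ∉ (hT.path y r).edges := fun hxy =>
    hx (Walk.fst_mem_support_of_mem_edges _ hxy)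
  rw [hT.mem_subtreeBelow_iff, hT.mem_subtreeBelow_iff, hT.path_eq_cons h hx, Walk.edges_cons,
    List.mem_cons]
  by_cases hg : g = s(x, y)
  · simp [hg, hxy]
  · simp [hg]

lemma mem_subtreeBelow_iff_of_isTrail {p : G.Walk x y} (hp : p.IsTrail) :
    (x ∈ G.subtreeBelow r g ↔ y ∈ G.subtreeBelow r g) ↔ g ∉ p.edges := by
  induction p with
  | nil => simp
  | cons h q ih =>
    rw [Walk.isTrail_cons] at hp
    have hadj := hT.mem_subtreeBelow_iff_of_adj (r := r) (g := g) h
    have hq := ih hp.1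
    have hnot : g = s(_, _) → g ∉ q.edges := fun hg => hg ▸ hp.2
    simp only [Walk.edges_cons, List.mem_cons]
    tauto

lemma exists_mem_subtreeBelow (hg : g ∈ G.edgeSet) : ∃ c ∈ g, c ∈ G.subtreeBelow r g := by
  induction g using Sym2.ind with | _ x y => ?_
  have hxy := (hT.mem_subtreeBelow_iff_of_adj (r := r) (g := s(x, y)) hg).not.2 (by simp)
  by_cases hx : x ∈ G.subtreeBelow r s(x, y)
  · exact ⟨x, Sym2.mem_mk_left x y, hx⟩
  · exact ⟨y, Sym2.mem_mk_right x y, by tauto⟩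

lemma not_reachable_of_mem_path {H : SimpleGraph V} (hH : H ≤ G)
    (hg : g ∈ (hT.path y x).edges) (hgH : g ∉ H.edgeSet) : ¬ H.Reachable y x := by
  rintro ⟨q⟩
  rw [← hT.eq_path (q.toPath.2.mapLe hH), Walk.edges_mapLe_eq_edges] at hg
  exact hgH ((q.toPath : H.Walk y x).edges_subset_edgeSet hg)

lemma subtreeBelow_subset {c : V} {g' : Sym2 V} (hc : c ∈ G.subtreeBelow r g) (hcg : c ∈ g') :
    G.subtreeBelow r g' ⊆ G.subtreeBelow r g := by
  intro u hu
  rw [hT.mem_subtreeBelow_iff] at hc hu ⊢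
  have hcu : c ∈ (hT.path u r).support := Walk.mem_support_of_mem_edges hu hcg
  rw [← hT.eq_path ((hT.isPath_path u r).dropUntil hcu)] at hc
  exact Walk.edges_dropUntil_subset_edges _ hcu hc

noncomputable def parent (r u : V) : V := (hT.path u r).snd

lemma path_eq_cons_parent (hu : u ≠ r) :
    ∃ h : G.Adj u (hT.parent r u), hT.path u r = Walk.cons h (hT.path (hT.parent r u) r) := by
  have hnil : ¬ (hT.path u r).Nil := Walk.not_nil_of_ne hu
  exact ⟨_, ((hT.path u r).cons_tail_eq hnil).symm.trans
    (congrArg _ (hT.eq_path (hT.isPath_path u r).tail))⟩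

lemma ncard_subtreeBelow_le [Finite V] (r : V) (g : Sym2 V) :
    (G.subtreeBelow r g).ncard ≤
      (G.edgeSet ∩ {g' | ∀ u ∈ g', u ∈ G.subtreeBelow r g}).ncard + 1 := by
  have hne : ∀ u ∈ G.subtreeBelow r g, u ≠ r := fun u hu hur =>
    root_notMem_subtreeBelow r g (hur ▸ hu)
  have hmaps : ∀ u ∈ G.subtreeBelow r g, s(u, hT.parent r u) ∈
      insert g (G.edgeSet ∩ {g' | ∀ u ∈ g', u ∈ G.subtreeBelow r g}) := by
    intro u hu
    obtain ⟨hadj, hpath⟩ := hT.path_eq_cons_parent (hne u hu)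
    by_cases hgu : g = s(u, hT.parent r u)
    · exact Or.inl hgu.symm
    have hpar : hT.parent r u ∈ G.subtreeBelow r g := by
      rw [hT.mem_subtreeBelow_iff, hpath, Walk.edges_cons] at hu
      exact (hT.mem_subtreeBelow_iff).2 ((List.mem_cons.1 hu).resolve_left hgu)
    refine Or.inr ⟨hadj, fun w hw => ?_⟩
    rcases Sym2.mem_iff.1 hw with rfl | rfl
    exacts [hu, hpar]
  have hinj : Set.InjOn (fun u => s(u, hT.parent r u)) (G.subtreeBelow r g) := by
    intro u hu w hw huw
    rcases Sym2.eq_iff.1 huw with ⟨h, -⟩ | ⟨hu', hw'⟩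
    · exact h
    obtain ⟨_, hpu⟩ := hT.path_eq_cons_parent (hne u hu)
    obtain ⟨_, hpw⟩ := hT.path_eq_cons_parent (hne w hw)
    have hlu : (hT.path u r).length = (hT.path w r).length + 1 := by
      rw [hpu, Walk.length_cons, hw']
    have hlw : (hT.path w r).length = (hT.path u r).length + 1 := by
      rw [hpw, Walk.length_cons, hu']
    omega
  calc (G.subtreeBelow r g).ncard
      ≤ (insert g (G.edgeSet ∩ {g' | ∀ u ∈ g', u ∈ G.subtreeBelow r g})).ncard :=
        Set.ncard_le_ncard_of_injOn _ hmaps hinj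
    _ ≤ _ := Set.ncard_insert_le _ _

end IsTree

end SimpleGraph

open SimpleGraph

section CycleEdgeSet

variable {V : Type*} [DecidableEq V] {C : Finset (Sym2 V)}

lemma IsCycleEdgeSet.not_isDiag (hC : IsCycleEdgeSet C) {g : Sym2 V} (hg : g ∈ C) :
    ¬ g.IsDiag := by
  obtain ⟨_, w, -, rfl⟩ := hC
  exact (⊤ : SimpleGraph V).not_isDiag_of_mem_edgeSet
    (w.edges_subset_edgeSet (List.mem_toFinset.1 hg))

lemma IsCycleEdgeSet.not_subset_edgeSet {G : SimpleGraph V} (hC : IsCycleEdgeSet C)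
    (hG : G.IsAcyclic) : ¬ (C : Set (Sym2 V)) ⊆ G.edgeSet := by
  intro hsub
  obtain ⟨_, w, hw, rfl⟩ := hC
  have hw_edges : ∀ g ∈ w.edges, g ∈ G.edgeSet := fun g hg => hsub (by simpa using hg)
  exact hG (w.transfer G hw_edges) (hw.transfer hw_edges)

lemma IsCycleEdgeSet.edgeVerts_subset (hC : IsCycleEdgeSet C) {D : Set V}
    (hD : ∀ a b, s(a, b) ∈ C → (a ∈ D ↔ b ∈ D)) {c : V}
    (hcC : c ∈ edgeVerts (C : Set (Sym2 V))) (hc : c ∈ D) :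
    edgeVerts (C : Set (Sym2 V)) ⊆ D := by
  obtain ⟨x, w, -, rfl⟩ := hC
  have hsupp : ∀ u ∈ edgeVerts (w.edges.toFinset : Set (Sym2 V)), u ∈ w.support := by
    rintro u ⟨g, hg, hug⟩
    exact SimpleGraph.Walk.mem_support_of_mem_edges (List.mem_toFinset.1 hg) hug
  have hw := w.mem_iff_of_forall_edges (D := D) fun a b hab => hD a b (List.mem_toFinset.2 hab)
  intro u hu
  exact (hw u (hsupp u hu)).2 ((hw c (hsupp c hcC)).1 hc)

end CycleEdgeSet

section Rainbow

variable {V ι : Type*} [DecidableEq V] {E : ι → Finset (Sym2 V)}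

lemma exists_rainbow_cycle_of_isPath (σ : Sym2 V → ι) {x y : V}
    {p : (⊤ : SimpleGraph V).Walk y x} (hp : p.IsPath) (hσ : Set.InjOn σ {g | g ∈ p.edges})
    (hpE : ∀ g ∈ p.edges, g ∈ E (σ g)) {i : ι} (hxy : x ≠ y) (hi : s(x, y) ∈ E i)
    (hf : s(x, y) ∉ p.edges) (hfresh : ∀ g ∈ p.edges, σ g ≠ i) :
    ∃ R, IsRainbow E R ∧ IsCycleEdgeSet R := by
  have hadj : (⊤ : SimpleGraph V).Adj x y := hxy
  have hmem : ∀ g, g ∈ (Walk.cons hadj p).edges.toFinset ↔ g = s(x, y) ∨ g ∈ p.edges := by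
    simp
  refine ⟨_, ⟨update σ s(x, y) i, ?_, ?_⟩, x, _,
    Path.cons_isCycle ⟨p, hp⟩ hadj hf, rfl⟩
  · have hne : ∀ g ∈ p.edges, g ≠ s(x, y) := fun g hg h => hf (h ▸ hg)
    intro g₁ hg₁ g₂ hg₂ h
    rw [Finset.mem_coe, hmem] at hg₁ hg₂
    rcases hg₁ with rfl | hg₁ <;> rcases hg₂ with rfl | hg₂
    · rfl
    · rw [update_self, update_of_ne (hne g₂ hg₂)] at h
      exact absurd h.symm (hfresh g₂ hg₂)
    · rw [update_self, update_of_ne (hne g₁ hg₁)] at h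
      exact absurd h (hfresh g₁ hg₁)
    · rw [update_of_ne (hne g₁ hg₁), update_of_ne (hne g₂ hg₂)] at h
      exact hσ hg₁ hg₂ h
  · intro g hg
    rcases (hmem g).1 hg with rfl | hg
    · rwa [update_self]
    · rw [update_of_ne (by rintro rfl; exact hf hg)]
      exact hpE g hg

lemma exists_rainbow_cycle_of_forest {G : SimpleGraph V} {e : ι → Sym2 V} {s : Set ι}
    (hmem : ∀ i ∈ s, e i ∈ E i) (hG : G.edgeSet ⊆ e '' s) {x y : V}
    {p : G.Walk y x} (hp : p.IsPath) {i : ι} (hxy : x ≠ y) (hi : s(x, y) ∈ E i)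
    (hf : s(x, y) ∉ e '' s) (hfresh : i ∉ s ∨ e i ∉ p.edges) :
    ∃ R, IsRainbow E R ∧ IsCycleEdgeSet R := by
  have : Nonempty ι := ⟨i⟩
  have hpe : ∀ g ∈ p.edges, g ∈ e '' s := fun g hg => hG (p.edges_subset_edgeSet hg)
  have hσ : ∀ g ∈ p.edges, invFunOn e s g ∈ s ∧ e (invFunOn e s g) = g := fun g hg =>
    ⟨invFunOn_mem (hpe g hg), invFunOn_eq (hpe g hg)⟩
  refine exists_rainbow_cycle_of_isPath (invFunOn e s) (p := p.mapLe le_top) (hp.mapLe le_top)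
    ?_ ?_ hxy hi ?_ ?_ <;> simp only [Walk.edges_mapLe_eq_edges]
  · intro g₁ hg₁ g₂ hg₂ h
    rw [← (hσ g₁ hg₁).2, ← (hσ g₂ hg₂).2, h]
  · intro g hg
    simpa only [(hσ g hg).2] using hmem _ (hσ g hg).1
  · exact fun h => hf (hpe _ h)
  · intro g hg h
    rcases hfresh with hi | hi
    · exact hi (h ▸ (hσ g hg).1)
    · rw [← h, (hσ g hg).2] at hi
      exact hi hg

end Rainbow

section StarsAndCycles

variable {V ι : Type*} {v : V}

lemma IsStar.exists_eq_mk {S : Finset (Sym2 V)} (hS : IsStar v S) {g : Sym2 V} (hg : g ∈ S) :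
    ∃ b, b ≠ v ∧ g = s(v, b) := by
  obtain ⟨hnd, hv⟩ := hS.2 g hg
  obtain ⟨b, rfl⟩ := Sym2.mem_iff_exists.1 hv
  exact ⟨b, fun hb => hnd (by simp [hb]), rfl⟩

variable [DecidableEq V] {E : ι → Finset (Sym2 V)}
  (hE : ∀ i, IsStar v (E i) ∨ IsCycleEdgeSet (E i))
  (hno : ¬ ∃ R, IsRainbow E R ∧ IsCycleEdgeSet R)
  (hdisj : ∀ i, IsStar v (E i) → ∀ j, j ≠ i → Disjoint (E i) (E j))
include hE

lemma not_isDiag_of_isStar_or_isCycleEdgeSet {i : ι} {g : Sym2 V} (hg : g ∈ E i) :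
    ¬ g.IsDiag :=
  (hE i).elim (fun hS => (hS.2 g hg).1) (fun hC => hC.not_isDiag hg)

include hno hdisj

lemma exists_mem_not_reachable {e : ι → Sym2 V} {s : Set ι} (hmem : ∀ i ∈ s, e i ∈ E i)
    (hacyc : (fromEdgeSet (e '' s)).IsAcyclic) {i : ι} (hi : i ∉ s) :
    ∃ x y, s(x, y) ∈ E i ∧ x ≠ y ∧ ¬ (fromEdgeSet (e '' s)).Reachable x y := by
  by_contra! hreach
  by_cases hout : ∃ f ∈ E i, f ∉ e '' s
  · obtain ⟨f, hf, hfs⟩ := hout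
    induction f using Sym2.ind with | _ x y => ?_
    have hxy : x ≠ y := by simpa using not_isDiag_of_isStar_or_isCycleEdgeSet hE hf
    obtain ⟨p⟩ := (hreach x y hf hxy).symm
    have hG : (fromEdgeSet (e '' s)).edgeSet ⊆ e '' s := by
      rw [edgeSet_fromEdgeSet]
      exact Set.sdiff_subset
    exact hno (exists_rainbow_cycle_of_forest hmem hG p.toPath.2 hxy hf hfs (Or.inl hi))
  push Not at hout
  rcases hE i with hS | hC
  · obtain ⟨f, hf⟩ := Finset.card_pos.1 (lt_of_lt_of_le two_pos hS.1)
    obtain ⟨j, hj, rfl⟩ := hout f hf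
    exact Finset.disjoint_left.1 (hdisj i hS j (by rintro rfl; exact hi hj)) hf (hmem j hj)
  · refine hC.not_subset_edgeSet hacyc fun g hg => ?_
    rw [edgeSet_fromEdgeSet]
    exact ⟨hout g hg, hC.not_isDiag hg⟩

lemma exists_isAcyclic_rainbow_forest [Nonempty V] (s : Finset ι) :
    ∃ e : ι → Sym2 V, (∀ i ∈ s, e i ∈ E i) ∧ Set.InjOn e s ∧
      (fromEdgeSet (e '' s)).IsAcyclic := by
  classical
  induction s using Finset.induction_on with
  | empty =>
    exact ⟨fun _ => s(Classical.arbitrary V, Classical.arbitrary V), by simp, by simp, by simp⟩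
  | insert i s hi ih =>
    obtain ⟨e, hmem, hinj, hacyc⟩ := ih
    have hi' : i ∉ (s : Set ι) := hi
    obtain ⟨x, y, hf, hxy, hreach⟩ :=
      exists_mem_not_reachable hE hno hdisj hmem hacyc hi'
    have hfs : s(x, y) ∉ e '' s := fun hfs =>
      hreach (Adj.reachable ((fromEdgeSet_adj _).2 ⟨hfs, hxy⟩))
    have heq : Set.EqOn e (update e i s(x, y)) s := fun j hj =>
      (update_of_ne (by rintro rfl; exact hi hj) _ _).symm
    have himage : update e i s(x, y) '' ↑(insert i s) = insert s(x, y) (e '' s) := by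
      rw [Finset.coe_insert, Set.image_insert_eq, update_self, heq.image_eq]
    refine ⟨update e i s(x, y), fun j hj => ?_, ?_, ?_⟩
    · rcases Finset.mem_insert.1 hj with rfl | hj
      · rwa [update_self]
      · rw [← heq hj]
        exact hmem j hj
    · rw [Finset.coe_insert, Set.injOn_insert hi', update_self, ← heq.image_eq]
      exact ⟨hinj.congr heq, hfs⟩
    · rw [himage, Set.insert_eq, fromEdgeSet_union, sup_comm]
      exact hacyc.sup_edge_of_not_reachable hreach

end StarsAndCycles

section RainbowTree

variable {V ι : Type*} {E : ι → Finset (Sym2 V)} {e : ι → Sym2 V}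

structure IsRainbowTree (E : ι → Finset (Sym2 V)) (e : ι → Sym2 V) : Prop where
  mem : ∀ i, e i ∈ E i
  injective : Injective e
  not_isDiag : ∀ i, ¬ (e i).IsDiag
  isTree : (fromEdgeSet (Set.range e)).IsTree

lemma edgeSet_fromEdgeSet_range (hnd : ∀ i, ¬ (e i).IsDiag) :
    (fromEdgeSet (Set.range e)).edgeSet = Set.range e := by
  rw [edgeSet_fromEdgeSet]
  ext g
  refine ⟨fun h => h.1, ?_⟩
  rintro ⟨i, rfl⟩
  exact ⟨⟨i, rfl⟩, Sym2.mem_diagSet.not.2 (hnd i)⟩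

lemma isTree_fromEdgeSet_range [Finite V] (hcard : Nat.card V = Nat.card ι + 1)
    (hinj : Injective e) (hnd : ∀ i, ¬ (e i).IsDiag)
    (hacyc : (fromEdgeSet (Set.range e)).IsAcyclic) :
    (fromEdgeSet (Set.range e)).IsTree := by
  have : Nonempty V := (Nat.card_pos_iff.1 (by omega)).1
  apply hacyc.isTree_of_ncard
  rw [edgeSet_fromEdgeSet_range hnd, Set.ncard_range_of_injective hinj, hcard]

lemma exists_isRainbowTree [DecidableEq V] [Finite V] [Fintype ι] {v : V}
    (hcard : Nat.card V = Nat.card ι + 1) (hE : ∀ i, IsStar v (E i) ∨ IsCycleEdgeSet (E i))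
    (hno : ¬ ∃ R, IsRainbow E R ∧ IsCycleEdgeSet R)
    (hdisj : ∀ i, IsStar v (E i) → ∀ j, j ≠ i → Disjoint (E i) (E j)) :
    ∃ e, IsRainbowTree E e := by
  have : Nonempty V := (Nat.card_pos_iff.1 (by omega)).1
  obtain ⟨e, hmem, hinj, hacyc⟩ := exists_isAcyclic_rainbow_forest hE hno hdisj Finset.univ
  rw [Finset.coe_univ, Set.image_univ] at hacyc
  rw [Finset.coe_univ, Set.injOn_univ] at hinj
  have hmem' : ∀ i, e i ∈ E i := fun i => hmem i (Finset.mem_univ i)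
  have hnd : ∀ i, ¬ (e i).IsDiag := fun i =>
    not_isDiag_of_isStar_or_isCycleEdgeSet hE (hmem' i)
  exact ⟨e, hmem', hinj, hnd, isTree_fromEdgeSet_range hcard hinj hnd hacyc⟩

namespace IsRainbowTree

variable (he : IsRainbowTree E e)
include he

lemma mem_edgeSet (i : ι) : e i ∈ (fromEdgeSet (Set.range e)).edgeSet := by
  rw [edgeSet_fromEdgeSet_range he.not_isDiag]
  exact ⟨i, rfl⟩

lemma card_eq [Finite V] : Nat.card V = Nat.card ι + 1 := by
  have h := (isTree_iff_connected_and_card.1 he.isTree).2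
  rwa [Nat.card_coe_set_eq, edgeSet_fromEdgeSet_range he.not_isDiag,
    Set.ncard_range_of_injective he.injective, eq_comm] at h

variable [DecidableEq V] {i j : ι} {v x y : V}

/-- Otherwise the tree path from `y` to `x` and the edge `s(x, y)` form a rainbow cycle. -/
lemma mem_path_of_notMem_range (hno : ¬ ∃ R, IsRainbow E R ∧ IsCycleEdgeSet R)
    (hi : s(x, y) ∈ E i) (hxy : x ≠ y) (hf : s(x, y) ∉ Set.range e) :
    e i ∈ (he.isTree.path y x).edges := by
  by_contra h
  refine hno (exists_rainbow_cycle_of_forest (s := Set.univ) (fun i _ => he.mem i) ?_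
    (he.isTree.isPath_path y x) hxy hi (by rwa [Set.image_univ]) (Or.inr h))
  rw [Set.image_univ, edgeSet_fromEdgeSet_range he.not_isDiag]

lemma exchange [Finite V] [DecidableEq ι] (hf : s(x, y) ∈ E j) (hxy : x ≠ y)
    (hfe : s(x, y) ∉ Set.range e) (hj : e j ∈ (he.isTree.path y x).edges) :
    IsRainbowTree E (update e j s(x, y)) := by
  have hinj : Injective (update e j s(x, y)) := by
    intro a b hab
    by_cases ha : a = j <;> by_cases hb : b = j
    · rw [ha, hb]
    · rw [ha, update_self, update_of_ne hb] at hab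
      exact absurd ⟨b, hab.symm⟩ hfe
    · rw [hb, update_self, update_of_ne ha] at hab
      exact absurd ⟨a, hab⟩ hfe
    · rw [update_of_ne ha, update_of_ne hb] at hab
      exact he.injective hab
  have hnd : ∀ k, ¬ (update e j s(x, y) k).IsDiag := by
    intro k
    rcases eq_or_ne k j with rfl | hk
    · simpa using hxy
    · rw [update_of_ne hk]
      exact he.not_isDiag k
  have hrange : Set.range (update e j s(x, y)) ⊆ (Set.range e \ {e j}) ∪ {s(x, y)} := by
    rintro _ ⟨k, rfl⟩
    rcases eq_or_ne k j with rfl | hk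
    · simp
    · rw [update_of_ne hk]
      exact Or.inl ⟨⟨k, rfl⟩, fun h => hk (he.injective h)⟩
  have hH : fromEdgeSet (Set.range e \ {e j}) ≤ fromEdgeSet (Set.range e) :=
    fromEdgeSet_mono Set.sdiff_subset
  have hnreach : ¬ (fromEdgeSet (Set.range e \ {e j})).Reachable x y := fun h =>
    he.isTree.not_reachable_of_mem_path hH hj (by simp [edgeSet_fromEdgeSet]) h.symm
  have hacyc : (fromEdgeSet (Set.range (update e j s(x, y)))).IsAcyclic :=
    ((he.isTree.isAcyclic.anti hH).sup_edge_of_not_reachable hnreach).anti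
      (by rw [edge, ← fromEdgeSet_union]; exact fromEdgeSet_mono hrange)
  refine ⟨fun k => ?_, hinj, hnd, isTree_fromEdgeSet_range he.card_eq hinj hnd hacyc⟩
  rcases eq_or_ne k j with rfl | hk
  · rwa [update_self]
  · rw [update_of_ne hk]
    exact he.mem k

/-- After the exchange, every vertex below `e j` reaches the root avoiding `e i` by walking to
`y`, crossing the new edge and following the old tree path from `x`; this removes at least one
vertex from the subtree below `e i` and adds none. -/
lemma ncard_subtreeBelow_exchange_lt [Finite V] [DecidableEq ι]
    (he' : IsRainbowTree E (update e j s(x, y))) (hfe : s(x, y) ∉ Set.range e)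
    (hsub : (fromEdgeSet (Set.range e)).subtreeBelow v (e j) ⊆
      (fromEdgeSet (Set.range e)).subtreeBelow v (e i))
    (hy : y ∈ (fromEdgeSet (Set.range e)).subtreeBelow v (e j))
    (hx : x ∉ (fromEdgeSet (Set.range e)).subtreeBelow v (e j))
    (hxi : x ∉ (fromEdgeSet (Set.range e)).subtreeBelow v (e i)) :
    ((fromEdgeSet (Set.range (update e j s(x, y)))).subtreeBelow v (e i)).ncard <
      ((fromEdgeSet (Set.range e)).subtreeBelow v (e i)).ncard := by
  set T := fromEdgeSet (Set.range e)
  set T' := fromEdgeSet (Set.range (update e j s(x, y)))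
  have hxy : x ≠ y := by simpa using he'.not_isDiag j
  have hT' : ∀ {a b : V} (p : T.Walk a b), e j ∉ p.edges →
      ∀ g ∈ p.edges, g ∈ T'.edgeSet := by
    intro a b p hp g hg
    have hgT := p.edges_subset_edgeSet hg
    rw [edgeSet_fromEdgeSet_range he.not_isDiag] at hgT
    obtain ⟨k, rfl⟩ := hgT
    have hk : k ≠ j := by rintro rfl; exact hp hg
    rw [edgeSet_fromEdgeSet_range he'.not_isDiag]
    exact ⟨k, update_of_ne hk _ _⟩
  have hout : ∀ u ∉ T.subtreeBelow v (e j),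
      (u ∈ T'.subtreeBelow v (e i) ↔ u ∈ T.subtreeBelow v (e i)) := by
    intro u hu
    rw [he.isTree.mem_subtreeBelow_iff] at hu
    rw [he'.isTree.mem_subtreeBelow_iff, he.isTree.mem_subtreeBelow_iff,
      ← he'.isTree.eq_path ((he.isTree.isPath_path u v).transfer (hT' _ hu)),
      Walk.edges_transfer]
  have havoid : ∀ {a b : V} {g : Sym2 V},
      (a ∈ T.subtreeBelow v g ↔ b ∈ T.subtreeBelow v g) →
        g ∉ (he.isTree.path a b).edges :=
    fun h => (he.isTree.mem_subtreeBelow_iff_of_isTrail (he.isTree.isPath_path _ _).isTrail).1 h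
  have hin : ∀ u ∈ T.subtreeBelow v (e j), u ∉ T'.subtreeBelow v (e i) := by
    intro u hu
    have hpj := havoid (iff_of_true hu hy)
    have hpi := havoid (iff_of_true (hsub hu) (hsub hy))
    have hqj := havoid (iff_of_false hx (root_notMem_subtreeBelow (G := T) v (e j)))
    have hqi := havoid (iff_of_false hxi (root_notMem_subtreeBelow (G := T) v (e i)))
    have hadj : T'.Adj y x :=
      (fromEdgeSet_adj _).2 ⟨⟨j, by rw [update_self, Sym2.eq_swap]⟩, hxy.symm⟩
    refine he'.isTree.notMem_subtreeBelow_of_walk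
      (((he.isTree.path u y).transfer T' (hT' _ hpj)).append
        (Walk.cons hadj ((he.isTree.path x v).transfer T' (hT' _ hqj)))) ?_
    simp only [Walk.edges_append, Walk.edges_cons, List.mem_append, List.mem_cons]
    rintro (h | h | h)
    · exact hpi (by rwa [Walk.edges_transfer] at h)
    · exact hfe ⟨i, h.trans Sym2.eq_swap⟩
    · exact hqi (by rwa [Walk.edges_transfer] at h)
  obtain ⟨c, -, hc⟩ := he.isTree.exists_mem_subtreeBelow (r := v) (he.mem_edgeSet j)
  refine Set.ncard_lt_ncard (ssubset_of_subset_not_subset (fun u hu => ?_)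
    (fun h => hin c hc (h (hsub hc))))
  exact (hout u (fun h => hin u h hu)).1 hu

end IsRainbowTree

end RainbowTree

section MinimalRainbowTree

variable {V ι : Type*} [DecidableEq V] {v : V} {E : ι → Finset (Sym2 V)} {e : ι → Sym2 V}
  {i₀ j : ι}

namespace IsRainbowTree

variable (he : IsRainbowTree E e) (hno : ¬ ∃ R, IsRainbow E R ∧ IsCycleEdgeSet R)
include he hno

lemma mem_subtreeBelow_of_mem_star
    (hdisj : ∀ i, IsStar v (E i) → ∀ j, j ≠ i → Disjoint (E i) (E j))
    (hstar : IsStar v (E i₀)) {b : V} (hb : s(v, b) ∈ E i₀) :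
    b ∈ (fromEdgeSet (Set.range e)).subtreeBelow v (e i₀) := by
  have hvb : v ≠ b := by simpa using (hstar.2 _ hb).1
  by_cases hT : s(v, b) ∈ Set.range e
  · obtain ⟨k, hk⟩ := hT
    obtain rfl : k = i₀ := by
      by_contra hk₀
      exact Finset.disjoint_left.1 (hdisj i₀ hstar k hk₀) hb (hk ▸ he.mem k)
    have hadj : (fromEdgeSet (Set.range e)).Adj v b := (fromEdgeSet_adj _).2 ⟨⟨k, hk⟩, hvb⟩
    have hsep := (he.isTree.mem_subtreeBelow_iff_of_adj (r := v) (g := e k) hadj).not.2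
      (not_not.2 hk)
    have hv := root_notMem_subtreeBelow (G := fromEdgeSet (Set.range e)) v (e k)
    tauto
  · exact he.isTree.mem_subtreeBelow_iff.2 (he.mem_path_of_notMem_range hno hb hvb hT)

lemma edgeVerts_subset_insert_of_isStar
    (hdisj : ∀ i, IsStar v (E i) → ∀ j, j ≠ i → Disjoint (E i) (E j))
    (hstar : IsStar v (E i₀)) :
    edgeVerts (E i₀ : Set (Sym2 V)) ⊆
      insert v ((fromEdgeSet (Set.range e)).subtreeBelow v (e i₀)) := by
  rintro u ⟨g, hg, hug⟩
  obtain ⟨b, -, rfl⟩ := hstar.exists_eq_mk hg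
  rcases Sym2.mem_iff.1 hug with rfl | rfl
  exacts [Or.inl rfl, Or.inr (he.mem_subtreeBelow_of_mem_star hno hdisj hstar hg)]

lemma one_lt_ncard_subtreeBelow_of_isStar [Finite V]
    (hdisj : ∀ i, IsStar v (E i) → ∀ j, j ≠ i → Disjoint (E i) (E j))
    (hstar : IsStar v (E i₀)) :
    1 < ((fromEdgeSet (Set.range e)).subtreeBelow v (e i₀)).ncard := by
  obtain ⟨g₁, hg₁, g₂, hg₂, hne⟩ := Finset.one_lt_card.1 hstar.1
  obtain ⟨b₁, -, rfl⟩ := hstar.exists_eq_mk hg₁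
  obtain ⟨b₂, -, rfl⟩ := hstar.exists_eq_mk hg₂
  exact (Set.one_lt_ncard_iff).2 ⟨b₁, b₂,
    he.mem_subtreeBelow_of_mem_star hno hdisj hstar hg₁,
    he.mem_subtreeBelow_of_mem_star hno hdisj hstar hg₂, fun h => hne (h ▸ rfl)⟩

variable [Finite V] [DecidableEq ι]
  (hmin : ∀ e', IsRainbowTree E e' →
    ((fromEdgeSet (Set.range e)).subtreeBelow v (e i₀)).ncard ≤
      ((fromEdgeSet (Set.range e')).subtreeBelow v (e' i₀)).ncard)
include hmin

/-- Otherwise exchanging `e j` for the edge `s(x, y)` would shrink the subtree below `e i₀`. -/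
lemma mem_subtreeBelow_of_isMin (hj : j ≠ i₀)
    (hjB : ∀ u ∈ e j, u ∈ (fromEdgeSet (Set.range e)).subtreeBelow v (e i₀)) {x y : V}
    (hf : s(x, y) ∈ E j) (hxy : x ≠ y) (hfe : s(x, y) ∉ Set.range e) :
    x ∈ (fromEdgeSet (Set.range e)).subtreeBelow v (e i₀) ∧
      y ∈ (fromEdgeSet (Set.range e)).subtreeBelow v (e i₀) := by
  set T := fromEdgeSet (Set.range e)
  obtain ⟨c, hc⟩ : ∃ c, c ∈ e j := ⟨_, Sym2.out_fst_mem _⟩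
  have hsub : T.subtreeBelow v (e j) ⊆ T.subtreeBelow v (e i₀) :=
    he.isTree.subtreeBelow_subset (hjB c hc) hc
  have key : ∀ {x y : V}, s(x, y) ∈ E j → x ≠ y → s(x, y) ∉ Set.range e →
      y ∈ T.subtreeBelow v (e j) → x ∈ T.subtreeBelow v (e i₀) := by
    intro x y hf hxy hfe hy
    by_contra hx
    have he' := he.exchange hf hxy hfe (he.mem_path_of_notMem_range hno hf hxy hfe)
    have hlt := he.ncard_subtreeBelow_exchange_lt he' hfe hsub hy (fun h => hx (hsub h)) hx
    have hle := hmin _ he'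
    rw [update_of_ne hj.symm] at hle
    exact hle.not_gt hlt
  have hsep := (he.isTree.mem_subtreeBelow_iff_of_isTrail (r := v) (g := e j)
    (he.isTree.isPath_path y x).isTrail).not.2
    (not_not.2 (he.mem_path_of_notMem_range hno hf hxy hfe))
  by_cases hy : y ∈ T.subtreeBelow v (e j)
  · exact ⟨key hf hxy hfe hy, hsub hy⟩
  · have hx : x ∈ T.subtreeBelow v (e j) := by tauto
    rw [Sym2.eq_swap] at hf hfe
    exact ⟨hsub hx, key hf hxy.symm hfe hx⟩

lemma isCycleEdgeSet_and_edgeVerts_subset_of_isMin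
    (hE : ∀ i, IsStar v (E i) ∨ IsCycleEdgeSet (E i))
    (hdisj : ∀ i, IsStar v (E i) → ∀ j, j ≠ i → Disjoint (E i) (E j))
    (hstar : IsStar v (E i₀))
    (hjB : ∀ u ∈ e j, u ∈ (fromEdgeSet (Set.range e)).subtreeBelow v (e i₀)) :
    IsCycleEdgeSet (E j) ∧
      edgeVerts (E j : Set (Sym2 V)) ⊆ (fromEdgeSet (Set.range e)).subtreeBelow v (e i₀) := by
  have hvB := root_notMem_subtreeBelow (G := fromEdgeSet (Set.range e)) v (e i₀)
  have hj : j ≠ i₀ := by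
    rintro rfl
    exact hvB (hjB v (hstar.2 _ (he.mem j)).2)
  have hC : IsCycleEdgeSet (E j) :=
    (hE j).resolve_left fun hS => hvB (hjB v (hS.2 _ (he.mem j)).2)
  obtain ⟨c, hc⟩ : ∃ c, c ∈ e j := ⟨_, Sym2.out_fst_mem _⟩
  refine ⟨hC, hC.edgeVerts_subset (fun a b hab => ?_) ⟨e j, he.mem j, hc⟩ (hjB c hc)⟩
  have hne : a ≠ b := by simpa using hC.not_isDiag hab
  by_cases hT : s(a, b) ∈ Set.range e
  · have hi₀ : e i₀ ≠ s(a, b) := fun h =>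
      Finset.disjoint_left.1 (hdisj i₀ hstar j hj) (h ▸ he.mem i₀) hab
    exact (he.isTree.mem_subtreeBelow_iff_of_adj ((fromEdgeSet_adj _).2 ⟨hT, hne⟩)).2 hi₀
  · obtain ⟨ha, hb⟩ := he.mem_subtreeBelow_of_isMin hno hmin hj hjB hab hne hT
    exact iff_of_true ha hb

end IsRainbowTree

lemma IsRainbowTree.ncard_subtreeBelow_le [Finite V] (he : IsRainbowTree E e)
    (g : Sym2 V) :
    ((fromEdgeSet (Set.range e)).subtreeBelow v g).ncard ≤
      {j | ∀ u ∈ e j, u ∈ (fromEdgeSet (Set.range e)).subtreeBelow v g}.ncard + 1 := by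
  convert he.isTree.ncard_subtreeBelow_le v g using 2
  rw [edgeSet_fromEdgeSet_range he.not_isDiag, ← Set.ncard_image_of_injective _ he.injective]
  congr 1
  ext g'
  constructor
  · rintro ⟨k, hk, rfl⟩
    exact ⟨⟨k, rfl⟩, hk⟩
  · rintro ⟨⟨k, rfl⟩, hk⟩
    exact ⟨k, hk, rfl⟩

theorem exists_cycles_small_union_of_isStar [Finite V] [Fintype ι] [DecidableEq ι]
    (hcard : Nat.card V = Nat.card ι + 1) (hE : ∀ i, IsStar v (E i) ∨ IsCycleEdgeSet (E i))
    (hno : ¬ ∃ R, IsRainbow E R ∧ IsCycleEdgeSet R)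
    (hdisj : ∀ i, IsStar v (E i) → ∀ j, j ≠ i → Disjoint (E i) (E j))
    (hstar : IsStar v (E i₀)) :
    ∃ J : Finset ι, i₀ ∉ J ∧ 0 < J.card ∧
      (∀ j ∈ J, IsCycleEdgeSet (E j) ∧ v ∉ edgeVerts (E j : Set (Sym2 V))) ∧
      (edgeVerts ((E i₀ : Set (Sym2 V)) ∪ ⋃ j ∈ J, (E j : Set (Sym2 V)))).ncard ≤
        J.card + 2 := by
  classical
  obtain ⟨e, he, hmin⟩ := Set.exists_min_image {e | IsRainbowTree E e}
    (fun e => ((fromEdgeSet (Set.range e)).subtreeBelow v (e i₀)).ncard) (Set.toFinite _)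
    (exists_isRainbowTree hcard hE hno hdisj)
  set B := (fromEdgeSet (Set.range e)).subtreeBelow v (e i₀)
  have hvB : v ∉ B := root_notMem_subtreeBelow v _
  set J := Finset.univ.filter fun j => ∀ u ∈ e j, u ∈ B
  have hJ : ∀ j ∈ J, IsCycleEdgeSet (E j) ∧ edgeVerts (E j : Set (Sym2 V)) ⊆ B :=
    fun j hj => he.isCycleEdgeSet_and_edgeVerts_subset_of_isMin hno hmin hE hdisj hstar
      (Finset.mem_filter.1 hj).2
  have hB : 1 < B.ncard := he.one_lt_ncard_subtreeBelow_of_isStar hno hdisj hstar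
  have hBJ : B.ncard ≤ J.card + 1 := by
    have hJset : (J : Set ι) = {j | ∀ u ∈ e j, u ∈ B} := by ext; simp [J]
    rw [← Set.ncard_coe_finset, hJset]
    exact he.ncard_subtreeBelow_le (e i₀)
  have hunion : edgeVerts ((E i₀ : Set (Sym2 V)) ∪ ⋃ j ∈ J, (E j : Set (Sym2 V))) ⊆
      insert v B := by
    rintro u ⟨g, hg | hg, hug⟩
    · exact he.edgeVerts_subset_insert_of_isStar hno hdisj hstar ⟨g, hg, hug⟩
    · obtain ⟨j, hj, hg⟩ := Set.mem_iUnion₂.1 hg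
      exact Or.inr ((hJ j hj).2 ⟨g, hg, hug⟩)
  refine ⟨J, fun h => hvB ((Finset.mem_filter.1 h).2 v (hstar.2 _ (he.mem i₀)).2), by omega,
    fun j hj => ⟨(hJ j hj).1, fun hv => hvB ((hJ j hj).2 hv)⟩, ?_⟩
  calc _ ≤ (insert v B).ncard := Set.ncard_le_ncard hunion
    _ ≤ B.ncard + 1 := Set.ncard_insert_le v B
    _ ≤ J.card + 2 := by omega

end MinimalRainbowTree

/-- If each member of a family of `m` subgraphs of `K_{m+1}` is a star centered at `v`
or a cycle, the family has no rainbow cycle, every star is edge-disjoint from the other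
members, and the first member is a star, then some `0 < ℓ < m` cycles of the family
avoid `v` and their union with the first member has at most `ℓ + 2` vertices. -/
theorem star_and_cycles_small_union (m : ℕ) (hm : 0 < m) (v : Fin (m + 1))
    (E : Fin m → Finset (Sym2 (Fin (m + 1))))
    (hE : ∀ i, IsStar v (E i) ∨ IsCycleEdgeSet (E i))
    (hno : ¬ ∃ R : Finset (Sym2 (Fin (m + 1))), IsRainbow E R ∧ IsCycleEdgeSet R)
    (hdisj : ∀ i, IsStar v (E i) → ∀ j, j ≠ i → Disjoint (E i) (E j))
    (h1 : IsStar v (E ⟨0, hm⟩)) :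
    ∃ ℓ : ℕ, 0 < ℓ ∧ ℓ < m ∧ ∃ J : Finset (Fin m), J.card = ℓ ∧
      (∀ j ∈ J, IsCycleEdgeSet (E j) ∧ v ∉ edgeVerts (↑(E j) : Set (Sym2 (Fin (m + 1))))) ∧
      (edgeVerts ((↑(E ⟨0, hm⟩) : Set (Sym2 (Fin (m + 1)))) ∪
        ⋃ j ∈ J, (↑(E j) : Set (Sym2 (Fin (m + 1)))))).ncard ≤ ℓ + 2 := by
  obtain ⟨J, hJ₀, hJ, hcycles, hunion⟩ :=
    exists_cycles_small_union_of_isStar (by simp) hE hno hdisj h1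
  refine ⟨J.card, hJ, ?_, J, rfl, hcycles, hunion⟩
  simpa using Finset.card_lt_univ_of_notMem hJ₀
end

section
/- Let ℰ be a family of n ≥ 1 pairwise edge-disjoint nonempty subgraphs of K_{n+1}. If ℰ has no rainbow cycle, then ℰ has a monochromatic cut: a partition of the vertex set of ⋃ℰ into two parts V₁, V₂ such that exactly one member of ℰ contains an edge from V₁ to V₂. -/
/-!
Fix a transversal `c`, one edge `c j ∈ E j` of each colour. Every transversal is a rainbow edge
set, hence acyclic, hence (with `n` edges on `n + 1` vertices) a spanning tree. Removing `c k`
from the tree `c` splits it into two sides; let `S k` be one of them, so that `c l` crosses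
`S k` iff `l = k`. If no colour other than `i` crosses `S i`, then `S i` is a monochromatic cut.

Otherwise the relation "some edge of `E j` crosses `S k`" gives every `k` a predecessor, so it
contains an induced directed cycle `J` with successor map `s`. Replacing `c j` by an edge
`f j ∈ E j` crossing `S (s j)`, for `j ∈ J`, yields a transversal whose edges all cross an even
number of the `S k`, `k ∈ J`: `f j` crosses exactly `S j` and `S (s j)`. So none of them crosses
the symmetric difference of these sides, which `c j` does cross: this contradicts connectivity.
-/

open SimpleGraph Finset

variable {V ι : Type*}

section

open scoped Classical

def Crosses (X : Set V) (e : Sym2 V) : Prop := ∃ u ∈ X, ∃ w ∈ Xᶜ, e = s(u, w)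

lemma crosses_mk_iff {X : Set V} {u w : V} : Crosses X s(u, w) ↔ (u ∈ X ↔ w ∉ X) := by
  constructor
  · rintro ⟨a, ha, b, hb, h⟩
    rcases Sym2.eq_iff.mp h with ⟨rfl, rfl⟩ | ⟨rfl, rfl⟩ <;> grind
  · intro h
    by_cases hu : u ∈ X
    · exact ⟨u, hu, w, h.mp hu, rfl⟩
    · exact ⟨w, by grind, u, hu, Sym2.eq_swap⟩

lemma SimpleGraph.Connected.exists_crosses {G : SimpleGraph V} (hG : G.Connected) {X : Set V}
    {u w : V} (hu : u ∈ X) (hw : w ∉ X) : ∃ e ∈ G.edgeSet, Crosses X e := by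
  obtain ⟨d, -, hd, hd'⟩ := (hG.preconnected u w).some.exists_boundary_dart X hu hw
  exact ⟨d.edge, d.edge_mem, d.fst, hd, d.snd, hd', rfl⟩

lemma SimpleGraph.IsAcyclic.connected_of_card_edgeSet [Finite V] [Nonempty V]
    {G : SimpleGraph V} (hG : G.IsAcyclic) (hcard : Nat.card G.edgeSet + 1 = Nat.card V) :
    G.Connected := by
  obtain ⟨T, hGT, -, hT⟩ := connected_top.exists_isTree_le_of_le_of_isAcyclic le_top hG
  have hT' := (isTree_iff_connected_and_card.mp hT).2
  have hedge : G.edgeSet = T.edgeSet := by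
    refine Set.eq_of_subset_of_ncard_le (edgeSet_mono hGT) ?_ (Set.toFinite _)
    rw [← Nat.card_coe_set_eq, ← Nat.card_coe_set_eq]
    omega
  rw [edgeSet_inj.mp hedge]
  exact hT.connected

def symmDiffOver (J : Finset ι) (S : ι → Set V) : Set V :=
  {v | Odd #{k ∈ J | v ∈ S k}}

lemma crosses_symmDiffOver_iff {J : Finset ι} {S : ι → Set V} {e : Sym2 V} :
    Crosses (symmDiffOver J S) e ↔ Odd #{k ∈ J | Crosses (S k) e} := by
  induction e using Sym2.ind with | _ u w =>
  have hcount : #{k ∈ J | u ∈ S k} + #{k ∈ J | w ∈ S k} =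
      #{k ∈ J | Crosses (S k) s(u, w)} + 2 * #{k ∈ J | u ∈ S k ∧ w ∈ S k} := by
    simp only [card_filter, crosses_mk_iff, mul_sum, ← sum_add_distrib]
    exact sum_congr rfl fun k _ => by split_ifs <;> grind
  simp only [crosses_mk_iff, symmDiffOver, Set.mem_ofPred_eq, Nat.odd_iff] at *
  grind

def IsPredecessorMap (R : ι → ι → Prop) (J : Finset ι) (p : ι → ι) : Prop :=
  ∀ k ∈ J, p k ∈ J ∧ p k ≠ k ∧ R (p k) k

namespace IsPredecessorMap

variable {R : ι → ι → Prop} {J : Finset ι} {p : ι → ι}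

lemma surjOn (hp : IsPredecessorMap R J p)
    (hmin : ∀ J' p', J'.Nonempty → IsPredecessorMap R J' p' → #J ≤ #J') : Set.SurjOn p J J := by
  intro j hj
  by_contra hj'
  have hp' : IsPredecessorMap R (J.erase j) p := fun k hk =>
    have hpk := hp k (mem_of_mem_erase hk)
    ⟨mem_erase.mpr ⟨fun h => hj' ⟨k, mem_of_mem_erase hk, h⟩, hpk.1⟩, hpk.2⟩
  have hle := hmin _ _ ⟨p j, mem_erase.mpr ⟨(hp j hj).2.1, (hp j hj).1⟩⟩ hp'
  rw [card_erase_of_mem hj] at hle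
  have := card_pos.mpr ⟨j, hj⟩
  omega

lemma injOn (hp : IsPredecessorMap R J p)
    (hmin : ∀ J' p', J'.Nonempty → IsPredecessorMap R J' p' → #J ≤ #J') : Set.InjOn p J :=
  injOn_of_surjOn_of_card_le p (fun k hk => (hp k hk).1) (hp.surjOn hmin) le_rfl

/-- Redirecting `p k` to another predecessor `j` would leave `p k` outside the image of `p`. -/
lemma eq_of_rel (hp : IsPredecessorMap R J p)
    (hmin : ∀ J' p', J'.Nonempty → IsPredecessorMap R J' p' → #J ≤ #J') {j k : ι} (hj : j ∈ J)
    (hk : k ∈ J) (hkj : k ≠ j) (hR : R j k) : p k = j := by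
  by_contra hne
  have hp' : IsPredecessorMap R J (Function.update p k j) := by
    intro x hx
    by_cases hxk : x = k
    · subst hxk
      simpa [hj, hkj.symm] using hR
    · rw [Function.update_of_ne hxk]
      exact hp x hx
  obtain ⟨y, hy, hyk⟩ := hp'.surjOn hmin (hp k hk).1
  by_cases hy' : y = k
  · subst hy'
    exact hne (by simpa using hyk.symm)
  · rw [Function.update_of_ne hy'] at hyk
    exact hy' (hp.injOn hmin hy hk hyk)

end IsPredecessorMap

theorem exists_finset_existsUnique_succ [Fintype ι] [Nonempty ι] (R : ι → ι → Prop)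
    (h : ∀ k, ∃ j ≠ k, R j k) :
    ∃ J : Finset ι, J.Nonempty ∧ ∀ j ∈ J, ∃! k, k ∈ J ∧ k ≠ j ∧ R j k := by
  choose p₀ hp₀ using h
  obtain ⟨J, hJ, hmin⟩ := exists_min_image {J : Finset ι | J.Nonempty ∧ ∃ p, IsPredecessorMap R J p}
    card ⟨univ, mem_filter.mpr ⟨mem_univ _, univ_nonempty, p₀, fun k _ => ⟨mem_univ _, hp₀ k⟩⟩⟩
  obtain ⟨hJne, p, hp⟩ := (mem_filter.mp hJ).2
  replace hmin : ∀ J' p', J'.Nonempty → IsPredecessorMap R J' p' → #J ≤ #J' :=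
    fun J' p' hJ' hp' => hmin J' (mem_filter.mpr ⟨mem_univ _, hJ', p', hp'⟩)
  refine ⟨J, hJne, fun j hj => ?_⟩
  obtain ⟨k, hk, rfl⟩ := hp.surjOn hmin hj
  refine ⟨k, ⟨hk, (hp k hk).2.1.symm, (hp k hk).2.2⟩, fun k' ⟨hk', hk'j, hR⟩ => ?_⟩
  exact hp.injOn hmin hk' hk (hp.eq_of_rel hmin (hp k hk).1 hk' hk'j hR)

section Transversal

variable {E : ι → Finset (Sym2 V)} {c : ι → Sym2 V}

lemma injective_of_pairwise_disjoint (hdisj : ∀ i j, i ≠ j → Disjoint (E i) (E j))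
    (hc : ∀ j, c j ∈ E j) : c.Injective := by
  intro i j h
  by_contra hij
  exact disjoint_left.mp (hdisj i j hij) (hc i) (h ▸ hc j)

lemma isAcyclic_fromEdgeSet_range [DecidableEq V] (hno : ¬∃ R, IsRainbow E R ∧ IsCycleEdgeSet R)
    (hc : ∀ j, c j ∈ E j) : (fromEdgeSet (Set.range c)).IsAcyclic := by
  intro v w hw
  have hrange : ∀ e ∈ w.edges, ∃ j, c j = e := fun e he =>
    (edgeSet_fromEdgeSet (Set.range c) ▸ w.edges_subset_edgeSet he).1
  obtain ⟨j₀, -⟩ := hrange _ (w.edges.exists_mem_of_ne_nil (by simp [hw.not_nil])).choose_spec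
  have : Nonempty ι := ⟨j₀⟩
  refine hno ⟨w.edges.toFinset, ⟨Function.invFun c, ?_, ?_⟩, v, w.mapLe le_top,
    hw.mapLe le_top, by rw [Walk.edges_mapLe_eq_edges]⟩
  · intro e he e' he' h
    rw [← Function.invFun_eq (hrange e (by simpa using he)), h,
      Function.invFun_eq (hrange e' (by simpa using he'))]
  · intro e he
    have := hc (Function.invFun c e)
    rwa [Function.invFun_eq (hrange e (by simpa using he))] at this

lemma edgeSet_fromEdgeSet_range_s13 (hvalid : ∀ i, ∀ e ∈ E i, ¬e.IsDiag) (hc : ∀ j, c j ∈ E j) :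
    (fromEdgeSet (Set.range c)).edgeSet = Set.range c := by
  rw [edgeSet_fromEdgeSet, sdiff_eq_left, Set.disjoint_left]
  rintro _ ⟨j, rfl⟩
  exact hvalid j _ (hc j)

lemma connected_fromEdgeSet_range [Finite V] [DecidableEq V] (hcard : Nat.card V = Nat.card ι + 1)
    (hvalid : ∀ i, ∀ e ∈ E i, ¬e.IsDiag) (hdisj : ∀ i j, i ≠ j → Disjoint (E i) (E j))
    (hno : ¬∃ R, IsRainbow E R ∧ IsCycleEdgeSet R) (hc : ∀ j, c j ∈ E j) :
    (fromEdgeSet (Set.range c)).Connected := by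
  have : Nonempty V := (Nat.card_pos_iff.mp (by omega)).1
  refine (isAcyclic_fromEdgeSet_range hno hc).connected_of_card_edgeSet ?_
  rw [edgeSet_fromEdgeSet_range_s13 hvalid hc,
    Nat.card_range_of_injective (injective_of_pairwise_disjoint hdisj hc), hcard]

lemma exists_fundamental_cuts (hinj : c.Injective) (hdiag : ∀ j, ¬(c j).IsDiag)
    (hac : (fromEdgeSet (Set.range c)).IsAcyclic) :
    ∃ S : ι → Set V, ∀ l k, Crosses (S k) (c l) ↔ l = k := by
  suffices ∀ k, ∃ S : Set V, ∀ l, Crosses S (c l) ↔ l = k by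
    choose S hS using this
    exact ⟨S, fun l k => hS k l⟩
  intro k
  set H := (fromEdgeSet (Set.range c)).deleteEdges {c k}
  obtain ⟨u, w, huw⟩ : ∃ u w, s(u, w) = c k := (Sym2.exists (f := (· = _))).mp ⟨_, rfl⟩
  refine ⟨{x | H.Reachable u x}, fun l => ⟨fun hcross => ?_, ?_⟩⟩
  · by_contra hlk
    obtain ⟨a, b, hab⟩ : ∃ a b, s(a, b) = c l := (Sym2.exists (f := (· = _))).mp ⟨_, rfl⟩
    have hadj : H.Adj a b := by
      have hab' : a ≠ b := fun h => hdiag l (by rw [← hab, h]; exact Sym2.mk_isDiag_iff.mpr rfl)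
      simp [H, hab, hab', hinj.ne hlk]
    rw [← hab, crosses_mk_iff] at hcross
    have : H.Reachable u a ↔ H.Reachable u b :=
      ⟨fun h => h.trans hadj.reachable, fun h => h.trans hadj.symm.reachable⟩
    simp only [Set.mem_ofPred_eq] at hcross
    tauto
  · rintro rfl
    have hbridge : (fromEdgeSet (Set.range c)).IsBridge s(u, w) := by
      refine isAcyclic_iff_forall_isBridge.mp hac ?_
      rw [edgeSet_fromEdgeSet, huw]
      exact ⟨⟨l, rfl⟩, hdiag l⟩
    rw [← huw, crosses_mk_iff]
    refine ⟨fun _ => ?_, fun _ => Reachable.refl u⟩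
    simp only [H, Set.mem_ofPred_eq, ← huw]
    exact isBridge_iff.mp hbridge

lemma exists_odd_crossings {S : ι → Set V} {c' : ι → Sym2 V}
    (hS : ∀ l k, Crosses (S k) (c l) ↔ l = k) {J : Finset ι} (hJ : J.Nonempty)
    (hc' : ∀ l ∉ J, c' l = c l) (hconn : (fromEdgeSet (Set.range c')).Connected) :
    ∃ j ∈ J, Odd #{k ∈ J | Crosses (S k) (c' j)} := by
  obtain ⟨j₀, hj₀⟩ := hJ
  have hX : Crosses (symmDiffOver J S) (c j₀) := by
    have : {k ∈ J | Crosses (S k) (c j₀)} = {j₀} := by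
      ext k
      simp only [mem_filter, hS, mem_singleton]
      grind
    simp [crosses_symmDiffOver_iff, this]
  obtain ⟨u, hu, w, hw, -⟩ := hX
  obtain ⟨e, he, hcross⟩ := hconn.exists_crosses hu hw
  rw [edgeSet_fromEdgeSet] at he
  obtain ⟨l, rfl⟩ := he.1
  rw [crosses_symmDiffOver_iff] at hcross
  refine ⟨l, ?_, hcross⟩
  by_contra hl
  rw [hc' l hl, filter_eq_empty_iff.mpr fun k hk hlk => hl ((hS l k).mp hlk ▸ hk)] at hcross
  simp at hcross

lemma crosses_of_mem (hc : ∀ j, c j ∈ E j)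
    (htree : ∀ c' : ι → Sym2 V, (∀ j, c' j ∈ E j) → (fromEdgeSet (Set.range c')).Connected)
    {S : ι → Set V} (hS : ∀ l k, Crosses (S k) (c l) ↔ l = k) {k : ι} {f : Sym2 V}
    (hf : f ∈ E k) : Crosses (S k) f := by
  obtain ⟨j, hj, hodd⟩ := exists_odd_crossings (c' := Function.update c k f) hS
    (singleton_nonempty k) (fun l hl => Function.update_of_ne (by simpa using hl) _ _)
    (htree _ fun j => by
      by_cases hjk : j = k
      · subst hjk; simpa using hf
      · simpa [hjk] using hc j)
  rw [mem_singleton] at hj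
  subst hj
  by_contra h
  rw [filter_eq_empty_iff.mpr fun x hx => by
    rwa [mem_singleton.mp hx, Function.update_self]] at hodd
  simp at hodd

theorem exists_fundamental_cut_monochromatic [Fintype ι] [Nonempty ι] (hc : ∀ j, c j ∈ E j)
    (htree : ∀ c' : ι → Sym2 V, (∀ j, c' j ∈ E j) → (fromEdgeSet (Set.range c')).Connected)
    {S : ι → Set V} (hS : ∀ l k, Crosses (S k) (c l) ↔ l = k) :
    ∃ i, ∀ j ≠ i, ∀ f ∈ E j, ¬Crosses (S i) f := by
  by_contra! h
  obtain ⟨J, hJ, huniq⟩ :=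
    exists_finset_existsUnique_succ (fun j k => ∃ f ∈ E j, Crosses (S k) f) h
  have : Nonempty (Sym2 V) := ⟨c hJ.choose⟩
  choose! s hs hs_uniq using huniq
  choose! f hf hfs using fun j hj => (hs j hj).2.2
  obtain ⟨j, hj, hodd⟩ := exists_odd_crossings (c' := fun j => if j ∈ J then f j else c j) hS hJ
    (fun l hl => if_neg hl) (htree _ fun j => by split_ifs with h; exacts [hf j h, hc j])
  have hpair : {k ∈ J | Crosses (S k) (f j)} = {j, s j} := by
    ext k
    simp only [mem_filter, mem_insert, mem_singleton]
    constructor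
    · rintro ⟨hk, hcross⟩
      by_cases hkj : k = j
      · exact Or.inl hkj
      · exact Or.inr (hs_uniq j hj k ⟨hk, hkj, f j, hf j hj, hcross⟩)
    · rintro (rfl | rfl)
      · exact ⟨hj, crosses_of_mem hc htree hS (hf k hj)⟩
      · exact ⟨(hs j hj).1, hfs j hj⟩
  simp only [if_pos hj, hpair, card_pair (hs j hj).2.1.symm] at hodd
  exact Nat.not_odd_iff_even.mpr even_two hodd

lemma edgeVerts_eq_univ [Nontrivial V] (hc : ∀ j, c j ∈ E j)
    (hconn : (fromEdgeSet (Set.range c)).Connected) :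
    edgeVerts {e | ∃ i, e ∈ E i} = Set.univ := by
  refine Set.eq_univ_of_forall fun v => ?_
  obtain ⟨w, hw⟩ := exists_ne v
  obtain ⟨e, he, u, hu, w', -, hew⟩ :=
    hconn.exists_crosses (X := {v}) rfl (by simpa using hw)
  rw [edgeSet_fromEdgeSet] at he
  obtain ⟨l, rfl⟩ := he.1
  refine ⟨c l, ⟨l, hc l⟩, ?_⟩
  rw [hew, Set.mem_singleton_iff.mp hu]
  exact Sym2.mem_mk_left _ _

end Transversal

end

/-- A family of `n ≥ 1` pairwise edge-disjoint nonempty subgraphs of `K_{n+1}` with no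
rainbow cycle has a monochromatic cut. -/
theorem monochromatic_cut_of_no_rainbow_cycle (n : ℕ) (hn : 1 ≤ n)
    (E : Fin n → Finset (Sym2 (Fin (n + 1))))
    (hvalid : ∀ i, ∀ e ∈ E i, ¬ e.IsDiag)
    (hne : ∀ i, (E i).Nonempty)
    (hdisj : ∀ i j, i ≠ j → Disjoint (E i) (E j))
    (hno : ¬ ∃ R : Finset (Sym2 (Fin (n + 1))), IsRainbow E R ∧ IsCycleEdgeSet R) :
    ∃ V₁ V₂ : Set (Fin (n + 1)),
      V₁ ∪ V₂ = edgeVerts {e | ∃ i, e ∈ E i} ∧ Disjoint V₁ V₂ ∧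
      ∃! i : Fin n, ∃ e ∈ E i, ∃ u ∈ V₁, ∃ w ∈ V₂, e = s(u, w) := by
  have htree : ∀ c : Fin n → Sym2 (Fin (n + 1)), (∀ j, c j ∈ E j) →
      (fromEdgeSet (Set.range c)).Connected :=
    fun c hc => connected_fromEdgeSet_range (by simp) hvalid hdisj hno hc
  choose c hc using hne
  obtain ⟨S, hS⟩ := exists_fundamental_cuts (injective_of_pairwise_disjoint hdisj hc)
    (fun j => hvalid j _ (hc j)) (isAcyclic_fromEdgeSet_range hno hc)
  have : Nonempty (Fin n) := ⟨⟨0, hn⟩⟩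
  have : Nontrivial (Fin (n + 1)) := Fin.nontrivial_iff_two_le.mpr (by omega)
  obtain ⟨i, hi⟩ := exists_fundamental_cut_monochromatic hc htree hS
  refine ⟨S i, (S i)ᶜ, by rw [edgeVerts_eq_univ hc (htree c hc), Set.union_compl_self],
    disjoint_compl_right, i, ⟨c i, hc i, (hS i i).mpr rfl⟩, ?_⟩
  rintro j ⟨f, hf, hcross⟩
  by_contra hji
  exact hi j hji f hf hcross
end

section
/- Let T be a spanning tree of a graph with edges e₁, …, e_k distinguished, and let O₁, …, O_k be cycles such that for each i, j ∈ [k]: eᵢ ∈ O_j if and only if i = j or i ≡ j−1 (mod k). Then the symmetric difference O = O₁ △ ⋯ △ O_k is nonempty and contains none of e₁, …, e_k; moreover, since O is Eulerian (every vertex has even degree in O), O contains a cycle. -/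
/-
Each `O i` has even degree at every vertex, and degrees add modulo 2 under symmetric difference,
so `O = O₁ △ ⋯ △ Oₖ` is Eulerian. The fundamental edge `f i` lies in `O i` only, hence in `O`,
while `e i` lies in exactly two of the cycles, `O i` and `O (i+1)`, hence not in `O`. Finally, a
nonempty Eulerian edge set contains a cycle, because in an acyclic graph the first vertex of a
longest path has degree one.
-/

open Finset SimpleGraph

theorem Fin.card_filter_eq_or_val_add_one_mod {k : ℕ} (hk : 2 ≤ k) (i : Fin k) :
    #{j : Fin k | i = j ∨ (i.val + 1) % k = j.val} = 2 := by
  set j₀ : Fin k := ⟨(i.val + 1) % k, Nat.mod_lt _ (by omega)⟩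
  have hne : i ≠ j₀ := by
    intro h
    have hi : i.val = (i.val + 1) % k := congrArg Fin.val h
    rcases Nat.lt_or_ge (i.val + 1) k with hlt | hge
    · rw [Nat.mod_eq_of_lt hlt] at hi; omega
    · rw [show i.val + 1 = k by omega, Nat.mod_self] at hi; omega
  have : ({j : Fin k | i = j ∨ (i.val + 1) % k = j.val} : Finset _) = {i, j₀} := by
    ext j
    simp only [mem_filter, mem_univ, true_and, mem_insert, mem_singleton, j₀, Fin.ext_iff]
    omega
  rw [this, card_pair hne]

/-- The symmetric difference `O₁ △ ⋯ △ Oₖ` of a finite family: the elements lying in an odd number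
of its members. -/
def oddCover {ι α : Type*} [Fintype ι] [DecidableEq α] (O : ι → Finset α) : Finset α :=
  {x ∈ univ.biUnion O | Odd #{j | x ∈ O j}}

section oddCover

variable {ι α : Type*} [Fintype ι] [DecidableEq α] {O : ι → Finset α}

theorem mem_oddCover {x : α} : x ∈ oddCover O ↔ Odd #{j | x ∈ O j} := by
  refine ⟨fun h => (mem_filter.mp h).2, fun h => mem_filter.mpr ⟨?_, h⟩⟩
  obtain ⟨j, hj⟩ := card_pos.mp h.pos
  exact mem_biUnion.mpr ⟨j, mem_univ j, (mem_filter.mp hj).2⟩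

theorem exists_mem_of_mem_oddCover {x : α} (hx : x ∈ oddCover O) : ∃ j, x ∈ O j := by
  obtain ⟨j, hj⟩ := card_pos.mp (mem_oddCover.mp hx).pos
  exact ⟨j, (mem_filter.mp hj).2⟩

theorem even_card_filter_oddCover_iff (p : α → Prop) [DecidablePred p] :
    Even #{x ∈ oddCover O | p x} ↔ Even (∑ j, #{x ∈ O j | p x}) := by
  set U := {x ∈ univ.biUnion O | p x}
  have hcount : ∑ x ∈ U, #{j | x ∈ O j} = ∑ j, #{x ∈ O j | p x} := by
    refine (sum_card_bipartiteAbove_eq_sum_card_bipartiteBelow (fun x j => x ∈ O j)).trans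
      (sum_congr rfl fun j _ => congrArg card ?_)
    ext x
    simp only [bipartiteBelow, U, mem_filter, mem_biUnion, mem_univ, true_and]
    exact ⟨fun ⟨⟨_, hp⟩, hx⟩ => ⟨hx, hp⟩, fun ⟨hx, hp⟩ => ⟨⟨⟨j, hx⟩, hp⟩, hx⟩⟩
  have hodd : {x ∈ U | Odd #{j | x ∈ O j}} = {x ∈ oddCover O | p x} := by
    ext x; simp only [U, oddCover, mem_filter]; tauto
  rw [← hcount, even_sum_iff_even_card_odd, hodd]

end oddCover

def IsEulerianEdgeSet {V : Type*} [DecidableEq V] (S : Finset (Sym2 V)) : Prop :=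
  (∀ s ∈ S, ¬ s.IsDiag) ∧ ∀ v, Even #{s ∈ S | v ∈ s}

section EulerianEdgeSet

variable {V : Type*} [DecidableEq V]

theorem IsCycleEdgeSet.isEulerianEdgeSet {C : Finset (Sym2 V)} (hC : IsCycleEdgeSet C) :
    IsEulerianEdgeSet C := by
  obtain ⟨u, w, hw, rfl⟩ := hC
  refine ⟨fun s hs => not_isDiag_of_mem_edgeSet _
    (w.edges_subset_edgeSet (List.mem_toFinset.mp hs)), fun v => ?_⟩
  have hcard : #{s ∈ w.edges.toFinset | v ∈ s} = w.edges.countP (v ∈ ·) := by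
    rw [List.filter_toFinset, List.toFinset_card_of_nodup (hw.edges_nodup.filter _),
      List.countP_eq_length_filter]
  rw [hcard]
  exact (hw.isTrail.even_countP_edges_iff v).mpr (absurd rfl)

namespace IsEulerianEdgeSet

theorem oddCover {ι : Type*} [Fintype ι] {O : ι → Finset (Sym2 V)}
    (hO : ∀ j, IsEulerianEdgeSet (O j)) : IsEulerianEdgeSet (_root_.oddCover O) := by
  refine ⟨fun s hs => ?_, fun v => ?_⟩
  · obtain ⟨j, hj⟩ := exists_mem_of_mem_oddCover hs
    exact (hO j).1 s hj
  · exact (even_card_filter_oddCover_iff _).mpr (even_sum _ fun j _ => (hO j).2 v)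

variable {S : Finset (Sym2 V)}

theorem exists_adj_ne (hS : IsEulerianEdgeSet S) {u x : V}
    (hux : (fromEdgeSet (S : Set (Sym2 V))).Adj u x) :
    ∃ w, (fromEdgeSet (S : Set (Sym2 V))).Adj u w ∧ w ≠ x := by
  have hmem : s(u, x) ∈ ({s ∈ S | u ∈ s} : Finset _) :=
    mem_filter.mpr ⟨(fromEdgeSet_adj _).mp hux |>.1, Sym2.mem_mk_left u x⟩
  have hcard : 1 < #{s ∈ S | u ∈ s} := by
    obtain ⟨m, hm⟩ := hS.2 u
    have := card_pos.mpr ⟨_, hmem⟩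
    omega
  obtain ⟨s, hs, hsne⟩ := exists_mem_ne hcard s(u, x)
  obtain ⟨hsS, hus⟩ := mem_filter.mp hs
  obtain ⟨w, rfl⟩ := Sym2.mem_iff_exists.mp hus
  refine ⟨w, (fromEdgeSet_adj _).mpr ⟨hsS, fun h => hS.1 _ hsS (Sym2.mk_isDiag_iff.mpr h)⟩, ?_⟩
  rintro rfl
  exact hsne rfl

theorem not_isAcyclic (hS : IsEulerianEdgeSet S) (hne : S.Nonempty) :
    ¬ (fromEdgeSet (S : Set (Sym2 V))).IsAcyclic := by
  set G := fromEdgeSet (S : Set (Sym2 V))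
  intro hG
  obtain ⟨s, hs⟩ := hne
  induction s using Sym2.ind with | _ a b => ?_
  have hab : G.Adj a b :=
    (fromEdgeSet_adj _).mpr ⟨hs, fun h => hS.1 _ hs (Sym2.mk_isDiag_iff.mpr h)⟩
  have : Nonempty V := ⟨a⟩
  have : Finite G.edgeSet := by
    rw [edgeSet_fromEdgeSet]; exact (S.finite_toSet.sdiff).to_subtype
  obtain ⟨u, v, p, hp, hlongest⟩ := Walk.exists_isPath_forall_isPath_length_le_length G
  have hnil : ¬ p.Nil := by
    intro h
    have := hlongest _ _ _ (Walk.IsPath.of_adj hab)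
    simp [h.length_eq_zero] at this
  obtain ⟨w, huw, hw⟩ := hS.exists_adj_ne (p.adj_snd hnil)
  by_cases hwp : w ∈ p.support
  · exact hw (hG.eq_snd_of_adj_start hp huw hwp)
  · have := hlongest _ _ _ (hp.cons hwp : (Walk.cons huw.symm p).IsPath)
    simp at this

end IsEulerianEdgeSet

theorem exists_isCycleEdgeSet_subset_of_not_isAcyclic {S : Finset (Sym2 V)}
    (hS : ¬ (fromEdgeSet (S : Set (Sym2 V))).IsAcyclic) : ∃ C ⊆ S, IsCycleEdgeSet C := by
  obtain ⟨v, c, hc⟩ : ∃ v, ∃ c : (fromEdgeSet (S : Set (Sym2 V))).Walk v v, c.IsCycle := by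
    simpa [IsAcyclic] using hS
  have hsub : ∀ x ∈ c.edges, x ∈ S ∧ x ∈ (⊤ : SimpleGraph V).edgeSet := by
    intro x hx
    have := c.edges_subset_edgeSet hx
    rw [edgeSet_fromEdgeSet] at this
    exact ⟨this.1, by rw [edgeSet_top]; exact this.2⟩
  refine ⟨(c.transfer ⊤ fun x hx => (hsub x hx).2).edges.toFinset, fun x hx => ?_,
    v, _, hc.transfer _, rfl⟩
  rw [List.mem_toFinset, Walk.edges_transfer] at hx
  exact (hsub x hx).1

end EulerianEdgeSet

theorem symmDiff_of_fundamental_cycles_general {N k : ℕ} (hk : 2 ≤ k)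
    (T : Finset (Sym2 (Fin N)))
    (e : Fin k → Sym2 (Fin N))
    (f : Fin k → Sym2 (Fin N)) (hfinj : Function.Injective f) (hfT : ∀ i, f i ∉ T)
    (O : Fin k → Finset (Sym2 (Fin N)))
    (hOc : ∀ i, IsCycleEdgeSet (O i))
    (hOsub : ∀ i, (↑(O i) : Set (Sym2 (Fin N))) ⊆ insert (f i) (↑T : Set (Sym2 (Fin N))))
    (hfO : ∀ i, f i ∈ O i)
    (hpat : ∀ i j, e i ∈ O j ↔ (i = j ∨ (i.val + 1) % k = j.val)) :
    -- `SD` is the symmetric difference `O 0 ∆ ⋯ ∆ O (k-1)`: the edges lying in an odd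
    -- number of the cycles `O i`.
    let SD := (Finset.univ.biUnion O).filter
      (fun x => Odd ((Finset.univ.filter (fun j : Fin k => x ∈ O j)).card))
    SD.Nonempty ∧ (∀ i, e i ∉ SD) ∧ ∃ C ⊆ SD, IsCycleEdgeSet C := by
  intro SD
  change (oddCover O).Nonempty ∧ (∀ i, e i ∉ oddCover O) ∧ ∃ C ⊆ oddCover O, IsCycleEdgeSet C
  have hfO_iff : ∀ i j, f i ∈ O j ↔ j = i := fun i j =>
    ⟨fun h => (hfinj ((hOsub j h).resolve_right (hfT i))).symm, by rintro rfl; exact hfO _⟩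
  have hf : ∀ i, f i ∈ oddCover O := fun i => by simp [mem_oddCover, hfO_iff, filter_eq']
  have he : ∀ i, e i ∉ oddCover O := fun i => by
    simp only [mem_oddCover, hpat, Fin.card_filter_eq_or_val_add_one_mod hk]
    decide
  have hne : (oddCover O).Nonempty := ⟨f ⟨0, by omega⟩, hf _⟩
  have hEuler : IsEulerianEdgeSet (oddCover O) :=
    .oddCover fun j => (hOc j).isEulerianEdgeSet
  exact ⟨hne, he, exists_isCycleEdgeSet_subset_of_not_isAcyclic (hEuler.not_isAcyclic hne)⟩

/-- Let `T` be a spanning tree, `e i ∈ T` distinct distinguished edges, and `O i` the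
fundamental cycle of an edge `f i ∉ T`, such that `e i ∈ O j` iff `i = j` or
`i ≡ j - 1 (mod k)`. Then the symmetric difference of the `O i` is nonempty, contains
no `e i`, and contains a cycle. -/
theorem symmDiff_of_fundamental_cycles {N k : ℕ} (hk : 2 ≤ k)
    (T : Finset (Sym2 (Fin N)))
    (hTacyc : (SimpleGraph.fromEdgeSet (↑T : Set (Sym2 (Fin N)))).IsAcyclic)
    (hTconn : (SimpleGraph.fromEdgeSet (↑T : Set (Sym2 (Fin N)))).Connected)
    (e : Fin k → Sym2 (Fin N)) (he : ∀ i, e i ∈ T) (heinj : Function.Injective e)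
    (f : Fin k → Sym2 (Fin N)) (hfinj : Function.Injective f) (hfT : ∀ i, f i ∉ T)
    (O : Fin k → Finset (Sym2 (Fin N)))
    (hOc : ∀ i, IsCycleEdgeSet (O i))
    (hOsub : ∀ i, (↑(O i) : Set (Sym2 (Fin N))) ⊆ insert (f i) (↑T : Set (Sym2 (Fin N))))
    (hfO : ∀ i, f i ∈ O i)
    (hpat : ∀ i j, e i ∈ O j ↔ (i = j ∨ (i.val + 1) % k = j.val)) :
    -- `SD` is the symmetric difference `O 0 ∆ ⋯ ∆ O (k-1)`: the edges lying in an odd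
    -- number of the cycles `O i`.
    let SD := (Finset.univ.biUnion O).filter
      (fun x => Odd ((Finset.univ.filter (fun j : Fin k => x ∈ O j)).card))
    SD.Nonempty ∧ (∀ i, e i ∉ SD) ∧ ∃ C ⊆ SD, IsCycleEdgeSet C :=
  symmDiff_of_fundamental_cycles_general hk T e f hfinj hfT O hOc hOsub hfO hpat
end

section
/- For an edge set O with vertices contained in [n], O contains an odd cycle if and only if e₀ lies in the F₂-linear span of { e₀ + eᵢ + e_j : {i,j} ∈ O }, where e₀, e₁, …, e_n is the standard basis of F₂^{n+1}. -/
/-!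
Over `𝔽₂`, `e₀` lies in the span of the edge vectors exactly when some set `S` of edges sums
to `e₀`; reading off coordinates, this says that `|S|` is odd and that every vertex has even
degree in `S`. An odd cycle is such a set. Conversely, a nonempty edge set with all degrees even
is not a forest, so it contains a cycle; removing an even cycle keeps both parity conditions,
so repeating this eventually produces an odd cycle.
-/
open Finset SimpleGraph

namespace SimpleGraph

variable {V : Type*} {G : SimpleGraph V}

/-- The first vertex of a longest path in a forest is a leaf. -/
lemma IsAcyclic.exists_degree_eq_one [Fintype V] [DecidableRel G.Adj] (hG : G.IsAcyclic)
    {a b : V} (hab : G.Adj a b) : ∃ v, G.degree v = 1 := by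
  obtain ⟨u, v, p, hp, hmax⟩ := Walk.exists_isPath_forall_isPath_length_le_length G (N := ⟨a⟩)
  have hnil : ¬ p.Nil := fun h => by
    simpa [h.length_eq_zero] using hmax a b _ (Walk.IsPath.of_adj hab)
  refine ⟨u, degree_eq_one_iff_existsUnique_adj.2
    ⟨p.snd, p.adj_snd hnil, fun w hw => hG.eq_snd_of_adj_start hp hw ?_⟩⟩
  by_contra hw'
  simpa using hmax w v _ ((Walk.cons_isPath_iff hw.symm p).2 ⟨hp, hw'⟩)

lemma degree_fromEdgeSet [Fintype V] [DecidableEq V] {S : Finset (Sym2 V)}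
    (hS : ∀ e ∈ S, ¬ e.IsDiag) (v : V) :
    (fromEdgeSet (S : Set (Sym2 V))).degree v = #{e ∈ S | v ∈ e} := by
  rw [← card_incidenceFinset_eq_degree]
  congr 1
  ext e
  rw [mem_incidenceFinset, incidenceSet, edgeSet_fromEdgeSet, mem_filter, Set.mem_ofPred_eq,
    Set.mem_sdiff, mem_coe, Sym2.mem_diagSet]
  exact ⟨fun h => ⟨h.1.1, h.2⟩, fun h => ⟨⟨h.1, hS e h.1⟩, h.2⟩⟩

end SimpleGraph

section CycleEdgeSets

variable {V : Type*} [DecidableEq V]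

lemma IsCycleEdgeSet.nonempty {C : Finset (Sym2 V)} (hC : IsCycleEdgeSet C) : C.Nonempty := by
  obtain ⟨u, p, hp, rfl⟩ := hC
  have := hp.three_le_length
  rw [List.toFinset_nonempty_iff, ← List.length_pos_iff, Walk.length_edges]
  omega

lemma IsCycleEdgeSet.even_card_filter_mem {C : Finset (Sym2 V)} (hC : IsCycleEdgeSet C) (v : V) :
    Even #{e ∈ C | v ∈ e} := by
  obtain ⟨u, p, hp, rfl⟩ := hC
  have h := (hp.isTrail.even_countP_edges_iff v).2 fun h => (h rfl).elim
  rw [List.countP_eq_length_filter, ← List.toFinset_card_of_nodup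
    (hp.isTrail.edges_nodup.filter _), List.toFinset_filter] at h
  simpa only [decide_eq_true_eq] using h

variable [Fintype V]

lemma exists_isCycleEdgeSet_subset {S : Finset (Sym2 V)} (hS : ∀ e ∈ S, ¬ e.IsDiag)
    (hne : S.Nonempty) (heven : ∀ v, Even #{e ∈ S | v ∈ e}) :
    ∃ C ⊆ S, IsCycleEdgeSet C := by
  set G := fromEdgeSet (S : Set (Sym2 V))
  have hcyc : ¬ G.IsAcyclic := by
    intro hG
    obtain ⟨e, he⟩ := hne
    induction e using Sym2.ind with
    | _ a b =>
      obtain ⟨v, hv⟩ := hG.exists_degree_eq_one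
        ((fromEdgeSet_adj _).2 ⟨he, fun hab => hS _ he (Sym2.mk_isDiag_iff.2 hab)⟩)
      rw [degree_fromEdgeSet hS] at hv
      exact Nat.not_even_one (hv ▸ heven v)
  obtain ⟨u, p, hp⟩ : ∃ u, ∃ p : G.Walk u u, p.IsCycle := by simpa [IsAcyclic] using hcyc
  refine ⟨(p.mapLe le_top).edges.toFinset, fun e he => ?_, u, _, hp.mapLe le_top, rfl⟩
  rw [List.mem_toFinset, Walk.edges_mapLe_eq_edges] at he
  exact (edgeSet_fromEdgeSet _ ▸ p.edges_subset_edgeSet he).1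

lemma exists_isOddCycleEdgeSet_subset_of_even_degree {S : Finset (Sym2 V)}
    (hS : ∀ e ∈ S, ¬ e.IsDiag) (hodd : Odd #S) (heven : ∀ v, Even #{e ∈ S | v ∈ e}) :
    ∃ C ⊆ S, IsOddCycleEdgeSet C := by
  induction S using Finset.strongInduction with
  | H S ih =>
    obtain ⟨C, hCS, hC⟩ := exists_isCycleEdgeSet_subset hS (card_pos.1 hodd.pos) heven
    by_cases hCodd : Odd #C
    · exact ⟨C, hCS, hC, hCodd⟩
    have hCeven : Even #C := Nat.not_odd_iff_even.1 hCodd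
    have hcard : #(S \ C) + #C = #S := card_sdiff_add_card_eq_card hCS
    have hdeg (v : V) : #{e ∈ S \ C | v ∈ e} + #{e ∈ C | v ∈ e} = #{e ∈ S | v ∈ e} := by
      rw [← card_union_of_disjoint (disjoint_filter_filter sdiff_disjoint), ← filter_union,
        sdiff_union_of_subset hCS]
    obtain ⟨C', hC'S, hC'⟩ := ih (S \ C) (sdiff_ssubset hCS hC.nonempty)
      (fun e he => hS e (mem_sdiff.1 he).1)
      (by rw [← hcard, Nat.odd_add] at hodd; exact hodd.2 hCeven)
      (fun v => by
        have := heven v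
        rw [← hdeg, Nat.even_add] at this
        exact this.2 (hC.even_card_filter_mem v))
    exact ⟨C', hC'S.trans sdiff_subset, hC'⟩

lemma exists_isOddCycleEdgeSet_subset_iff {O : Finset (Sym2 V)} (hO : ∀ e ∈ O, ¬ e.IsDiag) :
    (∃ C ⊆ O, IsOddCycleEdgeSet C) ↔ ∃ S ⊆ O, Odd #S ∧ ∀ v, Even #{e ∈ S | v ∈ e} := by
  constructor
  · rintro ⟨C, hCO, hC, hodd⟩
    exact ⟨C, hCO, hodd, hC.even_card_filter_mem⟩
  · rintro ⟨S, hSO, hodd, heven⟩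
    obtain ⟨C, hCS, hC⟩ :=
      exists_isOddCycleEdgeSet_subset_of_even_degree (fun e he => hO e (hSO he)) hodd heven
    exact ⟨C, hCS.trans hSO, hC⟩

end CycleEdgeSets

lemma Submodule.mem_span_image_finset_iff_exists_subset_sum {ι M : Type*} [AddCommGroup M]
    [Module (ZMod 2) M] {s : Finset ι} {v : ι → M} {x : M} :
    x ∈ span (ZMod 2) (v '' s) ↔ ∃ t ⊆ s, ∑ i ∈ t, v i = x := by
  classical
  rw [mem_span_image_finset_iff_exists_fun']
  constructor
  · rintro ⟨c, rfl⟩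
    refine ⟨{i ∈ s | c i = 1}, filter_subset _ _, ?_⟩
    rw [sum_filter]
    refine sum_congr rfl fun i _ => ?_
    rcases (by decide : ∀ a : ZMod 2, a = 0 ∨ a = 1) (c i) with h | h <;> simp [h]
  · rintro ⟨t, hts, rfl⟩
    refine ⟨fun i => if i ∈ t then 1 else 0, ?_⟩
    simp_rw [ite_smul, one_smul, zero_smul]
    rw [← sum_filter, filter_mem_eq_inter, inter_eq_right.2 hts]

section EdgeVectors

variable {n : ℕ}

def edgeVector : Sym2 (Fin n) → Fin (n + 1) → ZMod 2 :=
  Sym2.lift ⟨fun i j => Pi.single 0 1 + Pi.single i.succ 1 + Pi.single j.succ 1,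
    fun _ _ => add_right_comm _ _ _⟩

lemma edgeVector_mk (i j : Fin n) :
    edgeVector s(i, j) = Pi.single 0 1 + Pi.single i.succ 1 + Pi.single j.succ 1 := rfl

lemma edgeVector_apply_zero (e : Sym2 (Fin n)) : edgeVector e 0 = 1 := by
  induction e using Sym2.ind with
  | _ i j => simp [edgeVector_mk, Fin.succ_ne_zero]

lemma edgeVector_apply_succ {e : Sym2 (Fin n)} (he : ¬ e.IsDiag) (v : Fin n) :
    edgeVector e v.succ = if v ∈ e then 1 else 0 := by
  induction e using Sym2.ind with
  | _ i j =>
    rw [Sym2.mk_isDiag_iff] at he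
    by_cases hi : v = i <;> by_cases hj : v = j <;>
      simp_all [edgeVector_mk, Fin.succ_ne_zero]

lemma sum_edgeVector_eq_single_zero_iff {S : Finset (Sym2 (Fin n))} (hS : ∀ e ∈ S, ¬ e.IsDiag) :
    ∑ e ∈ S, edgeVector e = Pi.single 0 1 ↔ Odd #S ∧ ∀ v, Even #{e ∈ S | v ∈ e} := by
  have h0 : (∑ e ∈ S, edgeVector e) 0 = #S := by simp [Finset.sum_apply, edgeVector_apply_zero]
  have hsucc (v : Fin n) : (∑ e ∈ S, edgeVector e) v.succ = #{e ∈ S | v ∈ e} := by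
    rw [Finset.sum_apply, sum_congr rfl fun e he => edgeVector_apply_succ (hS e he) v, sum_boole]
  rw [funext_iff, Fin.forall_fin_succ, h0, Pi.single_eq_same, ZMod.natCast_eq_one_iff_odd]
  simp_rw [hsucc, Pi.single_eq_of_ne (Fin.succ_ne_zero _), ZMod.natCast_eq_zero_iff_even]

lemma setOf_eq_image_edgeVector (O : Finset (Sym2 (Fin n))) :
    {x : Fin (n + 1) → ZMod 2 | ∃ e ∈ O, ∃ i j : Fin n, e = s(i, j) ∧
      x = Pi.single 0 1 + Pi.single i.succ 1 + Pi.single j.succ 1} = edgeVector '' O := by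
  ext x
  constructor
  · rintro ⟨e, he, i, j, rfl, rfl⟩
    exact ⟨s(i, j), he, rfl⟩
  · rintro ⟨e, he, rfl⟩
    induction e using Sym2.ind with
    | _ i j => exact ⟨s(i, j), he, i, j, rfl, rfl⟩

end EdgeVectors

/-- An edge set `O` on vertex set `[n]` contains an odd cycle iff `e₀` lies in the
`𝔽₂`-span of `{e₀ + eᵢ + eⱼ : {i, j} ∈ O}` in `𝔽₂^{n+1}`. -/
theorem odd_cycle_iff_mem_span (n : ℕ) (O : Finset (Sym2 (Fin n)))
    (hO : ∀ e ∈ O, ¬ e.IsDiag) :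
    (∃ C ⊆ O, IsOddCycleEdgeSet C) ↔
      (Pi.single (0 : Fin (n + 1)) (1 : ZMod 2)) ∈ Submodule.span (ZMod 2)
        {x : Fin (n + 1) → ZMod 2 | ∃ e ∈ O, ∃ i j : Fin n, e = s(i, j) ∧
          x = Pi.single (0 : Fin (n + 1)) (1 : ZMod 2)
            + Pi.single i.succ 1 + Pi.single j.succ 1} := by
  rw [setOf_eq_image_edgeVector, Submodule.mem_span_image_finset_iff_exists_subset_sum,
    exists_isOddCycleEdgeSet_subset_iff hO]
  exact exists_congr fun S => and_congr_right fun hSO =>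
    (sum_edgeVector_eq_single_zero_iff fun e he => hO e (hSO he)).symm
end

section
/- The maximum number of edges in a graph on n vertices containing no even cycle is ⌊3(n−1)/2⌋. -/
theorem Nat.card_add_card_le_of_surjective {α β : Type*} [Finite α] {f : α → β}
    (hf : Function.Surjective f) {t : Finset α} (ht : ∀ a ∈ t, ∀ b ∈ t, f a = f b) :
    Nat.card β + t.card ≤ Nat.card α + 1 := by
  classical
  have := Fintype.ofFinite α
  have := Finite.of_surjective f hf
  have := Fintype.ofFinite β
  rcases t.eq_empty_or_nonempty with rfl | ⟨a₀, ha₀⟩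
  · simpa using (Nat.card_le_card_of_surjective f hf).trans (Nat.le_succ _)
  have hsurj : Set.SurjOn f ↑(insert a₀ (Finset.univ \ t)) ↑(Finset.univ : Finset β) := by
    intro b _
    obtain ⟨a, rfl⟩ := hf b
    by_cases ha : a ∈ t
    · exact ⟨a₀, by simp, ht a₀ ha₀ a ha⟩
    · exact ⟨a, by simp [ha], rfl⟩
  calc Nat.card β + t.card
      ≤ (insert a₀ (Finset.univ \ t)).card + t.card := by
        simpa using Finset.card_le_card_of_surjOn f hsurj
    _ ≤ (Finset.univ \ t).card + 1 + t.card := by grw [Finset.card_insert_le]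
    _ = Nat.card α + 1 := by
        rw [Finset.card_sdiff_of_subset t.subset_univ, Finset.card_univ, Nat.card_eq_fintype_card]
        have := t.card_le_univ
        omega

namespace SimpleGraph

variable {V : Type*} {G : SimpleGraph V}

open Walk

def NoEvenCycle (G : SimpleGraph V) : Prop :=
  ∀ ⦃v : V⦄ (c : G.Walk v v), c.IsCycle → ¬ Even c.length

theorem NoEvenCycle.mono {H : SimpleGraph V} (hG : G.NoEvenCycle) (hle : H ≤ G) :
    H.NoEvenCycle := fun _ c hc => by
  simpa using hG (c.mapLe hle) ((isCycle_mapLe hle).mpr hc)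

theorem Walk.IsPath.isCycle_append_of_disjoint_edges {u v : V} {p : G.Walk u v}
    {q : G.Walk v u} (hp : p.IsPath) (hq : q.IsPath) (huv : u ≠ v)
    (hsupp : ∀ z ∈ p.support, z ∈ q.support → z = u ∨ z = v)
    (hedges : p.edges.Disjoint q.edges) : (p.append q).IsCycle := by
  refine hp.isCycle_append hq (fun z hzp hzq => ?_) ?_
  · rcases hsupp z (List.mem_of_mem_tail hzp) (List.mem_of_mem_tail hzq) with rfl | rfl
    · exact (List.nodup_cons.mp (p.cons_tail_support ▸ hp.support_nodup)).1 hzp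
    · exact (List.nodup_cons.mp (q.cons_tail_support ▸ hq.support_nodup)).1 hzq
  · by_contra! hlen
    cases p with
    | nil => exact huv rfl
    | cons h p =>
      cases q with
      | nil => exact huv rfl
      | cons h' q => cases p <;> cases q <;> simp_all [Sym2.eq_swap]

/-- The cycle `c` and the path `r` form a theta graph: `r` closes each of the two arcs `p`, `q`
of `c` between `a` and `b` to a cycle, and `|p| + |r|`, `|q| + |r|`, `|p| + |q|` cannot all be
odd. -/
theorem NoEvenCycle.eq_of_isPath_of_isCycle (hG : G.NoEvenCycle) {v a b : V} {c : G.Walk v v}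
    (hc : c.IsCycle) (ha : a ∈ c.support) (hb : b ∈ c.support) {r : G.Walk a b}
    (hr : r.IsPath) (hrc : ∀ z ∈ r.support, z ∈ c.support → z = a ∨ z = b)
    (hre : r.edges.Disjoint c.edges) : a = b := by
  classical
  by_contra hab
  have hc' : (c.rotate a ha).IsCycle := hc.rotate ha
  have hb' : b ∈ (c.rotate a ha).support := (mem_support_rotate_iff c a ha).mpr hb
  set p := (c.rotate a ha).takeUntil b hb'
  set q := (c.rotate a ha).dropUntil b hb'
  have hpq : p.append q = c.rotate a ha := take_spec _ hb'
  have hp : p.IsPath := hc'.isPath_takeUntil hb'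
  have hq : q.IsPath := (hpq ▸ hc').isPath_of_append_right (not_nil_of_ne hab)
  have hsupp : ∀ z, z ∈ p.support ∨ z ∈ q.support → z ∈ c.support := fun z hz => by
    rwa [← mem_support_append_iff, hpq, mem_support_rotate_iff] at hz
  have hedges : ∀ e, e ∈ p.edges ∨ e ∈ q.edges → e ∈ c.edges := fun e he => by
    rw [← List.mem_append, ← edges_append, hpq] at he
    exact (c.rotate_edges a ha).mem_iff.mp he
  have hlen : p.length + q.length = c.length := by
    rw [← length_append, hpq, length_rotate]
  have hpr := hG _ <| hp.isCycle_append_of_disjoint_edges hr.reverse hab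
    (fun z hzp hzr => hrc z (by simpa using hzr) (hsupp z (.inl hzp)))
    (fun e hep her => hre (by simpa using her) (hedges e (.inl hep)))
  have hqr := hG _ <| hq.isCycle_append_of_disjoint_edges hr (Ne.symm hab)
    (fun z hzq hzr => (hrc z hzr (hsupp z (.inr hzq))).symm)
    (fun e heq her => hre her (hedges e (.inr heq)))
  have hcc := hG c hc
  simp only [length_append, length_reverse, Nat.not_even_iff] at hpr hqr hcc
  omega

/-- A shortest path between two distinct vertices of `c` meets `c` only at its ends. -/
theorem NoEvenCycle.not_reachable_deleteEdges (hG : G.NoEvenCycle) {v x y : V}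
    {c : G.Walk v v} (hc : c.IsCycle) (hx : x ∈ c.support) (hy : y ∈ c.support) (hxy : x ≠ y) :
    ¬ (G.deleteEdges {e | e ∈ c.edges}).Reachable x y := by
  classical
  set H := G.deleteEdges {e | e ∈ c.edges}
  rintro ⟨w⟩
  have hex : ∃ k a b, ∃ (_ : a ∈ c.support) (_ : b ∈ c.support) (_ : a ≠ b) (r : H.Walk a b),
      r.IsPath ∧ r.length = k :=
    ⟨_, x, y, hx, hy, hxy, w.bypass, w.bypass_isPath, rfl⟩
  obtain ⟨a, b, ha, hb, hab, r, hr, hrlen⟩ := Nat.find_spec hex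
  have hrc : ∀ z ∈ r.support, z ∈ c.support → z = a ∨ z = b := by
    intro z hz hzc
    by_contra! hne
    exact Nat.find_min hex (hrlen ▸ length_takeUntil_lt_length hz hne.2)
      ⟨a, z, ha, hzc, hne.1.symm, _, hr.takeUntil hz, rfl⟩
  refine hab (hG.eq_of_isPath_of_isCycle hc ha hb ((isPath_mapLe (deleteEdges_le _)).mpr hr)
    (by simpa [support_mapLe_eq_support]) ?_)
  rw [edges_mapLe_eq_edges]
  intro e her hec
  have := r.edges_subset_edgeSet her
  rw [edgeSet_deleteEdges] at this
  exact this.2 hec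

theorem card_connectedComponent_add_card_le_of_le [Finite V] {H : SimpleGraph V} (hle : H ≤ G)
    {s : Finset V} (hG : ∀ x ∈ s, ∀ y ∈ s, G.Reachable x y)
    (hH : ∀ x ∈ s, ∀ y ∈ s, H.Reachable x y → x = y) :
    Nat.card G.ConnectedComponent + s.card ≤ Nat.card H.ConnectedComponent + 1 := by
  classical
  have hinj : Set.InjOn H.connectedComponentMk s := fun x hx y hy hxy =>
    hH x hx y hy (ConnectedComponent.exact hxy)
  rw [← Finset.card_image_of_injOn hinj]
  refine Nat.card_add_card_le_of_surjective (ConnectedComponent.surjective_map_ofLE hle) ?_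
  simp only [Finset.mem_image]
  rintro _ ⟨x, hx, rfl⟩ _ ⟨y, hy, rfl⟩
  simpa using ConnectedComponent.sound (hG x hx y hy)

theorem IsBridge.card_connectedComponent_lt [Finite V] {u v : V} (hadj : G.Adj u v)
    (hbr : G.IsBridge s(u, v)) :
    Nat.card G.ConnectedComponent < Nat.card (G.deleteEdges {s(u, v)}).ConnectedComponent := by
  classical
  have hnr := isBridge_iff.mp hbr
  have := card_connectedComponent_add_card_le_of_le (G.deleteEdges_le {s(u, v)}) (s := {u, v})
    (by simp [hadj.reachable, hadj.reachable.symm]) <| by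
      simp only [Finset.mem_insert, Finset.mem_singleton]
      rintro x (rfl | rfl) y (rfl | rfl) h
      exacts [rfl, absurd h hnr, absurd h.symm hnr, rfl]
  rw [Finset.card_pair hadj.ne] at this
  omega

theorem NoEvenCycle.card_connectedComponent_deleteEdges_cycle [Finite V] (hG : G.NoEvenCycle)
    {v : V} {c : G.Walk v v} (hc : c.IsCycle) :
    Nat.card G.ConnectedComponent + c.length ≤
      Nat.card (G.deleteEdges {e | e ∈ c.edges}).ConnectedComponent + 1 := by
  classical
  have hcard : c.support.tail.toFinset.card = c.length := by
    rw [List.toFinset_card_of_nodup hc.support_nodup, List.length_tail, length_support]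
    rfl
  rw [← hcard]
  refine card_connectedComponent_add_card_le_of_le (G.deleteEdges_le _) ?_ ?_
  · intro x hx y hy
    rw [List.mem_toFinset] at hx hy
    exact (c.takeUntil x (List.mem_of_mem_tail hx)).reachable.symm.trans
      (c.takeUntil y (List.mem_of_mem_tail hy)).reachable
  · intro x hx y hy hxy
    rw [List.mem_toFinset] at hx hy
    by_contra hne
    exact hG.not_reachable_deleteEdges hc (List.mem_of_mem_tail hx) (List.mem_of_mem_tail hy)
      hne hxy

theorem Walk.IsTrail.ncard_edgeSet_deleteEdges_add_length [Finite V] {v : V} {c : G.Walk v v}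
    (hc : c.IsTrail) :
    (G.deleteEdges {e | e ∈ c.edges}).edgeSet.ncard + c.length = G.edgeSet.ncard := by
  classical
  have hsub : {e | e ∈ c.edges} ⊆ G.edgeSet := fun e he => c.edges_subset_edgeSet he
  have hcard : {e | e ∈ c.edges}.ncard = c.length := by
    rw [show {e | e ∈ c.edges} = ↑c.edges.toFinset by ext; simp, Set.ncard_coe_finset,
      List.toFinset_card_of_nodup hc.edges_nodup, length_edges]
  rw [edgeSet_deleteEdges, Set.ncard_sdiff hsub, ← hcard]
  have := Set.ncard_le_ncard hsub
  omega

theorem NoEvenCycle.two_mul_ncard_edgeSet_add_three_mul_card_le [Finite V]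
    (hG : G.NoEvenCycle) :
    2 * G.edgeSet.ncard + 3 * Nat.card G.ConnectedComponent ≤ 3 * Nat.card V := by
  induction hm : G.edgeSet.ncard using Nat.strong_induction_on generalizing G with | _ m ih
  rcases G.edgeSet.eq_empty_or_nonempty with hE | ⟨e, he⟩
  · have := Nat.card_le_card_of_surjective G.connectedComponentMk Quot.mk_surjective
    rw [hE, Set.ncard_empty] at hm
    omega
  induction e using Sym2.ind with | _ u v
  by_cases hbr : G.IsBridge s(u, v)
  · have hH := Set.ncard_sdiff_singleton_add_one he
    rw [← edgeSet_deleteEdges] at hH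
    have := ih _ (by omega) (hG.mono (G.deleteEdges_le {s(u, v)})) rfl
    have := hbr.card_connectedComponent_lt (G.mem_edgeSet.mp he)
    omega
  · obtain ⟨w, c, hc, -⟩ : ∃ (w : V) (c : G.Walk w w), c.IsCycle ∧ s(u, v) ∈ c.edges := by
      simpa [isBridge_iff_forall_cycle_notMem he] using hbr
    have hH := hc.isTrail.ncard_edgeSet_deleteEdges_add_length
    have hL := hc.three_le_length
    have := ih _ (by omega) (hG.mono (G.deleteEdges_le {e | e ∈ c.edges})) rfl
    have := hG.card_connectedComponent_deleteEdges_cycle hc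
    omega

theorem Walk.IsCycle.length_eq_three_of_adj_eq {a u : V}
    (huniq : ∀ ⦃x y z⦄, x ≠ a → y ≠ a → z ≠ a → G.Adj x y → G.Adj x z → y = z)
    {c : G.Walk u u} (hc : c.IsCycle) : c.length = 3 := by
  classical
  have key : ∀ {w} {c : G.Walk w w}, c.IsCycle → ∀ i, 1 ≤ i → i < c.length →
      c.getVert (i - 1) ≠ a → c.getVert i ≠ a → c.getVert (i + 1) = a := by
    intro w c hc i hi1 hil hprev hi
    by_contra hnext
    refine hc.getVert_sub_one_ne_getVert_add_one hil.le
      (huniq hi hprev hnext ?_ (c.adj_getVert_succ hil))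
    have := c.adj_getVert_succ (i := i - 1) (by omega)
    rwa [Nat.sub_add_cancel hi1, adj_comm] at this
  have h3 := hc.three_le_length
  by_cases ha : a ∈ c.support
  · have hc' := hc.rotate ha
    have hL := length_rotate c a ha
    have hne : ∀ i, 0 < i → i < c.length → (c.rotate a ha).getVert i ≠ a := fun i h0 hi heq => by
      rw [hc'.getVert_endpoint_iff (by omega)] at heq
      omega
    have := key hc' 2 (by omega) (by omega) (hne 1 (by omega) (by omega))
      (hne 2 (by omega) (by omega))
    rw [hc'.getVert_endpoint_iff (by omega)] at this
    omega
  · have hmem : ∀ i, c.getVert i ≠ a := fun i e => ha (e ▸ c.getVert_mem_support i)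
    exact absurd (key hc 1 le_rfl (by omega) (hmem _) (hmem _)) (hmem _)

def windmillEdge (k : ℕ) : Fin k ⊕ Fin (k / 2) → Sym2 (Fin (k + 1))
  | .inl j => s(0, j.succ)
  | .inr t => s(⟨2 * t + 1, by omega⟩, ⟨2 * t + 2, by omega⟩)

def windmillGraph (k : ℕ) : SimpleGraph (Fin (k + 1)) :=
  fromEdgeSet (Set.range (windmillEdge k))

theorem windmillEdge_injective (k : ℕ) : Function.Injective (windmillEdge k) := by
  rintro (i | s) (j | t) h <;> simp [windmillEdge, Fin.ext_iff] at h ⊢ <;> omega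

theorem ncard_edgeSet_windmillGraph (k : ℕ) : (windmillGraph k).edgeSet.ncard = k + k / 2 := by
  rw [windmillGraph, edgeSet_fromEdgeSet, sdiff_eq_left.mpr,
    Set.ncard_range_of_injective (windmillEdge_injective k)]
  · simp
  · rw [Set.disjoint_left]
    rintro _ ⟨i | t, rfl⟩ <;> simp [windmillEdge, Fin.ext_iff]

theorem windmillGraph_adj_eq (k : ℕ) ⦃x y z : Fin (k + 1)⦄ (hx : x ≠ 0) (hy : y ≠ 0)
    (hz : z ≠ 0) (hxy : (windmillGraph k).Adj x y) (hxz : (windmillGraph k).Adj x z) :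
    y = z := by
  simp only [windmillGraph, fromEdgeSet_adj, Set.mem_range] at hxy hxz
  rw [← Fin.val_ne_zero_iff] at hx hy hz
  obtain ⟨⟨i | s, hs⟩, -⟩ := hxy <;> obtain ⟨⟨j | t, ht⟩, -⟩ := hxz <;>
    simp only [windmillEdge, Sym2.eq_iff, Fin.ext_iff, Fin.val_succ, Fin.val_zero] at hs ht ⊢ <;>
    omega

theorem noEvenCycle_windmillGraph (k : ℕ) : (windmillGraph k).NoEvenCycle := fun _ c hc => by
  rw [hc.length_eq_three_of_adj_eq (windmillGraph_adj_eq k)]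
  decide

end SimpleGraph

open SimpleGraph in
/-- The maximum number of edges in a graph on `n` vertices with no even cycle is
`⌊3(n-1)/2⌋`. -/
theorem max_edges_no_even_cycle (n : ℕ) :
    IsGreatest {m | ∃ G : SimpleGraph (Fin n),
      (∀ (v : Fin n) (w : G.Walk v v), w.IsCycle → ¬ Even w.length) ∧
      G.edgeSet.ncard = m} (3 * (n - 1) / 2) := by
  constructor
  · obtain _ | k := n
    · exact ⟨⊥, fun v => v.elim0, by simp⟩
    · refine ⟨windmillGraph k, fun v => noEvenCycle_windmillGraph k (v := v), ?_⟩
      rw [ncard_edgeSet_windmillGraph]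
      omega
  · rintro m ⟨G, hG, rfl⟩
    have hbound := NoEvenCycle.two_mul_ncard_edgeSet_add_three_mul_card_le (fun v => hG v)
    rw [Nat.card_fin] at hbound
    obtain _ | k := n
    · omega
    · have := Nat.card_pos (α := G.ConnectedComponent)
      omega
end

section
/- Every family of ⌊3(n−1)/2⌋ + 1 even cycles in K_n has a rainbow even cycle. -/
/-! Let `R` be a rainbow set of maximum size among those that contain no even cycle. A graph on
`n` vertices without even cycles has at most `⌊3(n−1)/2⌋` edges, so some member `O i` of the
family is unused by `R`. As `O i` is an even cycle, it is not contained in `R`; adding an edge of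
`O i \ R` with colour `i` keeps `R` rainbow, so by maximality the enlarged set contains an even
cycle, and that cycle is rainbow.

The edge bound `2 |E| ≤ 3 (|supp E| - 1)` is proved by induction on `|E|`. A vertex of degree one
is deleted together with its edge. Otherwise, let `v₀ v₁ … v_L` be a longest path; every
neighbour of `v₀` lies on it, and parity forces `v₀` and `v₁` to have degree two: any further
chord or detour at `v₀` or `v₁` would close, together with segments of the path, cycles whose
lengths cannot all be odd. Deleting the three edges at `v₀` and `v₁` removes two vertices. -/

namespace SimpleGraph

variable {V : Type*} {G H : SimpleGraph V}

def EvenCycleFree (G : SimpleGraph V) : Prop :=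
  ∀ ⦃v : V⦄ (c : G.Walk v v), c.IsCycle → Odd c.length

theorem EvenCycleFree.anti (hGH : G ≤ H) (hH : H.EvenCycleFree) : G.EvenCycleFree :=
  fun _ c hc => by simpa using hH (c.mapLe hGH) (hc.mapLe hGH)

theorem evenCycleFree_bot : (⊥ : SimpleGraph V).EvenCycleFree := by
  rintro v (_ | ⟨h, _⟩) hc
  · exact absurd rfl hc.ne_nil
  · exact h.elim

namespace Walk

variable {u v : V} {P : G.Walk u v}

theorem IsTrail.card_toFinset_edges [DecidableEq V] (hP : P.IsTrail) :
    P.edges.toFinset.card = P.length := by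
  rw [List.toFinset_card_of_nodup hP.edges_nodup, length_edges]

@[grind =]
theorem IsPath.getVert_eq_getVert_iff (hP : P.IsPath) {s t : ℕ} (hs : s ≤ P.length)
    (ht : t ≤ P.length) : P.getVert s = P.getVert t ↔ s = t :=
  ⟨fun h => hP.getVert_injOn hs ht h, congrArg _⟩

theorem IsPath.exists_subpath (hP : P.IsPath) {i k : ℕ} (hik : i ≤ k) (hk : k ≤ P.length) :
    ∃ S : G.Walk (P.getVert i) (P.getVert k), S.IsPath ∧ S.length = k - i ∧
      ∀ x ∈ S.support, ∃ t, i ≤ t ∧ t ≤ k ∧ P.getVert t = x := by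
  have hend : (P.drop i).getVert (k - i) = P.getVert k := by
    rw [drop_getVert]
    congr 1
    omega
  refine ⟨((P.drop i).take (k - i)).copy rfl hend, ?_, ?_, fun x hx => ?_⟩
  · simpa using (hP.drop i).take (k - i)
  · simp only [length_copy, take_length, drop_length]
    omega
  · obtain ⟨m, rfl, -⟩ := mem_support_iff_exists_getVert.mp hx
    exact ⟨i + min (k - i) m, by omega, by omega, by simp [take_getVert, drop_getVert]⟩

theorem IsPath.exists_getVert_eq_of_adj_start (hP : P.IsPath)
    (hmax : ∀ (u' v' : V) (Q : G.Walk u' v'), Q.IsPath → Q.length ≤ P.length)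
    {x : V} (hx : G.Adj u x) : ∃ i ≤ P.length, P.getVert i = x := by
  by_contra! h
  have hxP : x ∉ P.support := fun hx' => by
    obtain ⟨i, rfl, hi⟩ := mem_support_iff_exists_getVert.mp hx'
    exact h i hi rfl
  simpa using hmax _ _ _ (hP.cons hxP (h := hx.symm))

/-- Replacing the start of `P` by `x` gives another longest path, so the second neighbour of `x`
lies on `P`. -/
theorem IsPath.exists_adj_getVert_of_notMem_support (hP : P.IsPath)
    (hmax : ∀ (u' v' : V) (Q : G.Walk u' v'), Q.IsPath → Q.length ≤ P.length)
    (hdeg : ∀ v w, G.Adj v w → ∃ x, G.Adj v x ∧ x ≠ w) {x : V} (hxP : x ∉ P.support)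
    (hx : G.Adj (P.getVert 1) x) : ∃ i, 2 ≤ i ∧ i ≤ P.length ∧ G.Adj x (P.getVert i) := by
  have hL := hmax _ _ (cons hx Walk.nil) (by simp [hx.ne])
  have hPnil : ¬ P.Nil := by
    rw [← length_eq_zero_iff]
    simp only [length_cons, length_nil] at hL
    omega
  have hxT : x ∉ P.tail.support := fun h =>
    hxP (List.mem_of_mem_tail (support_tail_of_not_nil P hPnil ▸ h))
  let P' := cons hx.symm P.tail
  have hmax' : ∀ (u' v' : V) (Q : G.Walk u' v'), Q.IsPath → Q.length ≤ P'.length := by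
    intro u' v' Q hQ
    have := hmax _ _ Q hQ
    simp only [P', length_cons, length_tail]
    omega
  obtain ⟨y, hxy, hy1⟩ := hdeg x _ hx.symm
  obtain ⟨k, hkL, rfl⟩ := (hP.tail.cons hxT).exists_getVert_eq_of_adj_start hmax' hxy
  obtain _ | _ | i := k
  · simp at hxy
  · simp at hy1
  · refine ⟨i + 2, by omega, by simp only [length_cons, length_tail] at hkL; omega, ?_⟩
    simpa [P', getVert_tail] using hxy

end Walk

open Walk

attribute [local grind →] IsPath.getVert_eq_start_iff
attribute [local grind =] support_nil

section LongestPath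

variable {u v : V} {P : G.Walk u v}

/-- The segment of `P` from index `a` to index `b`, closed up by `q`, is a cycle. -/
theorem EvenCycleFree.odd_sub_add_length (hG : G.EvenCycleFree) (hP : P.IsPath) {a b : ℕ}
    (hab : a < b) (hb : b ≤ P.length) {x y : V} {q : G.Walk x y} (hx : P.getVert b = x)
    (hy : P.getVert a = y) (hq : q.support.Nodup)
    (hdisj : ∀ t, a < t → t < b → P.getVert t ∉ q.support) (hlen : 1 < b - a ∨ 1 < q.length) :
    Odd (b - a + q.length) := by
  subst hx hy
  obtain ⟨S, hS, hSlen, hSsupp⟩ := hP.exists_subpath hab.le hb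
  have hSnd := hS.support_nodup
  rw [← S.cons_tail_support] at hSnd
  have hcyc : (S.append q).IsCycle := by
    refine hS.isCycle_append (.mk' hq) (fun z hzS hzq => ?_) (by omega)
    rw [← q.cons_tail_support] at hq
    obtain ⟨t, hat, htb, rfl⟩ := hSsupp _ (List.mem_of_mem_tail hzS)
    rcases hat.lt_or_eq with hat | rfl
    · rcases htb.lt_or_eq with htb | rfl
      · exact hdisj t hat htb (List.mem_of_mem_tail hzq)
      · exact (List.nodup_cons.mp hq).1 hzq
    · exact (List.nodup_cons.mp hSnd).1 hzS
  simpa [hSlen] using hG _ hcyc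

theorem EvenCycleFree.even_of_adj_start (hG : G.EvenCycleFree) (hP : P.IsPath) {j : ℕ}
    (hj2 : 2 ≤ j) (hjL : j ≤ P.length) (hj : G.Adj u (P.getVert j)) : Even j := by
  have := hG.odd_sub_add_length hP (a := 0) (q := cons hj.symm nil) (by omega) hjL rfl
    P.getVert_zero (by grind) (by grind) (by omega)
  simpa [Nat.odd_add_one] using this

theorem EvenCycleFree.not_adj_start (hG : G.EvenCycleFree) (hP : P.IsPath) {i j : ℕ}
    (hi : 2 ≤ i) (hij : i < j) (hjL : j ≤ P.length) (hj : G.Adj u (P.getVert j))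
    (hjeven : Even j) : ¬ G.Adj u (P.getVert i) := by
  intro hi'
  have h1 := hG.even_of_adj_start hP hi (by omega) hi'
  have h2 := hG.odd_sub_add_length hP (q := cons hj.symm (cons hi' nil)) hij hjL rfl rfl
    (by grind) (by grind) (by simp)
  simp only [length_cons, length_nil, Nat.odd_iff] at h2
  rw [Nat.even_iff] at h1 hjeven
  omega

theorem EvenCycleFree.not_adj_getVert_one (hG : G.EvenCycleFree) (hP : P.IsPath) {i j : ℕ}
    (hi : 3 ≤ i) (hiL : i ≤ P.length) (hj2 : 2 ≤ j) (hjL : j ≤ P.length)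
    (hj : G.Adj u (P.getVert j)) (hjeven : Even j) : ¬ G.Adj (P.getVert 1) (P.getVert i) := by
  intro h
  have h01 : G.Adj u (P.getVert 1) := by simpa using P.adj_getVert_succ (i := 0) (by omega)
  have h1 := hG.odd_sub_add_length hP (a := 1) (q := cons h.symm nil) (by omega) hiL rfl rfl
    (by grind) (by grind) (by omega)
  simp only [length_cons, length_nil, Nat.odd_iff] at h1
  rw [Nat.even_iff] at hjeven
  rcases lt_trichotomy i j with hij | rfl | hij
  · have h2 := hG.odd_sub_add_length hP (q := cons hj.symm (cons h01 (cons h nil))) hij hjL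
      rfl rfl (by grind) (by grind) (by simp)
    simp only [length_cons, length_nil, Nat.odd_iff] at h2
    omega
  · omega
  · have h2 := hG.odd_sub_add_length hP (q := cons h.symm (cons h01.symm (cons hj nil))) hij
      hiL rfl rfl (by grind) (by grind) (by simp)
    simp only [length_cons, length_nil, Nat.odd_iff] at h2
    omega

theorem EvenCycleFree.not_adj_of_notMem_support (hG : G.EvenCycleFree) (hP : P.IsPath) {x : V}
    (hxP : x ∉ P.support) {i j : ℕ} (hi : 2 ≤ i) (hiL : i ≤ P.length) (hj2 : 2 ≤ j)
    (hjL : j ≤ P.length) (hj : G.Adj u (P.getVert j)) (hjeven : Even j)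
    (hx : G.Adj (P.getVert 1) x) : ¬ G.Adj x (P.getVert i) := by
  intro h
  have h01 : G.Adj u (P.getVert 1) := by simpa using P.adj_getVert_succ (i := 0) (by omega)
  have hxP' := fun t => ne_of_mem_of_not_mem (P.getVert_mem_support t) hxP
  have hxu : x ≠ u := fun h => hxP (h ▸ P.start_mem_support)
  have h1 := hG.odd_sub_add_length hP (a := 1) (q := cons h.symm (cons hx.symm nil)) (by omega)
    hiL rfl rfl (by grind) (by grind) (by simp)
  simp only [length_cons, length_nil, Nat.odd_iff] at h1
  rw [Nat.even_iff] at hjeven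
  rcases lt_trichotomy i j with hij | rfl | hij
  · have h2 := hG.odd_sub_add_length hP (q := cons hj.symm (cons h01 (cons hx (cons h nil))))
      hij hjL rfl rfl (by grind) (by grind) (by simp)
    simp only [length_cons, length_nil, Nat.odd_iff] at h2
    omega
  · have h2 := hG.odd_sub_add_length hP (a := 0) (b := 1)
      (q := cons hx (cons h (cons hj.symm nil))) (by omega) (by omega) rfl P.getVert_zero
      (by grind) (by grind) (by simp)
    simp only [length_cons, length_nil, Nat.odd_iff] at h2
    omega
  · have h2 := hG.odd_sub_add_length hP
      (q := cons h.symm (cons hx.symm (cons h01.symm (cons hj nil)))) hij hiL rfl rfl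
      (by grind) (by grind) (by simp)
    simp only [length_cons, length_nil, Nat.odd_iff] at h2
    omega

theorem EvenCycleFree.eq_of_adj_start (hG : G.EvenCycleFree) (hP : P.IsPath)
    (hmax : ∀ (u' v' : V) (Q : G.Walk u' v'), Q.IsPath → Q.length ≤ P.length) {j : ℕ}
    (hjL : j ≤ P.length) (hj : G.Adj u (P.getVert j))
    (hjmax : ∀ i ≤ P.length, G.Adj u (P.getVert i) → i ≤ j) (hjeven : Even j) {x : V}
    (hx : G.Adj u x) : x = P.getVert 1 ∨ x = P.getVert j := by
  obtain ⟨i, hiL, rfl⟩ := hP.exists_getVert_eq_of_adj_start hmax hx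
  obtain _ | _ | i := i
  · simp at hx
  · exact .inl rfl
  · rcases (hjmax _ hiL hx).lt_or_eq with hij | hij
    · exact absurd hx (hG.not_adj_start hP (by omega) hij hjL hj hjeven)
    · exact .inr (congrArg _ hij)

theorem EvenCycleFree.eq_of_adj_getVert_one (hG : G.EvenCycleFree) (hP : P.IsPath)
    (hmax : ∀ (u' v' : V) (Q : G.Walk u' v'), Q.IsPath → Q.length ≤ P.length)
    (hdeg : ∀ v w, G.Adj v w → ∃ x, G.Adj v x ∧ x ≠ w) {j : ℕ} (hj2 : 2 ≤ j)
    (hjL : j ≤ P.length) (hj : G.Adj u (P.getVert j)) (hjeven : Even j) {x : V}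
    (hx : G.Adj (P.getVert 1) x) : x = u ∨ x = P.getVert 2 := by
  by_cases hxP : x ∈ P.support
  · obtain ⟨i, rfl, hiL⟩ := mem_support_iff_exists_getVert.mp hxP
    obtain _ | _ | _ | i := i
    · exact .inl P.getVert_zero
    · simp at hx
    · exact .inr rfl
    · exact absurd hx (hG.not_adj_getVert_one hP (by omega) hiL hj2 hjL hj hjeven)
  · obtain ⟨i, hi2, hiL, hxi⟩ := hP.exists_adj_getVert_of_notMem_support hmax hdeg hxP hx
    exact absurd hxi (hG.not_adj_of_notMem_support hP hxP hi2 hiL hj2 hjL hj hjeven hx)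

end LongestPath

/-- `v₀ v₁` is the first edge of a longest path and `a` the last neighbour of `v₀` on it. -/
theorem EvenCycleFree.exists_adj_pair_of_forall_exists_adj_ne [Finite V]
    (hG : G.EvenCycleFree) (hdeg : ∀ v w, G.Adj v w → ∃ x, G.Adj v x ∧ x ≠ w) {v w : V}
    (hvw : G.Adj v w) :
    ∃ v₀ v₁ a b, G.Adj v₀ v₁ ∧ G.Adj v₀ a ∧ G.Adj v₁ b ∧ a ≠ v₁ ∧
      (∀ x, G.Adj v₀ x → x = v₁ ∨ x = a) ∧ (∀ x, G.Adj v₁ x → x = v₀ ∨ x = b) := by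
  classical
  have : Nonempty V := ⟨v⟩
  obtain ⟨u, z, P, hP, hmax⟩ := exists_isPath_forall_isPath_length_le_length G
  have hL : 1 ≤ P.length := by simpa using hmax _ _ (cons hvw nil) (by simp [hvw.ne])
  have h01 : G.Adj u (P.getVert 1) := by simpa using P.adj_getVert_succ (i := 0) (by omega)
  obtain ⟨j, hjdef⟩ : ∃ j, j = Nat.findGreatest (fun i => G.Adj u (P.getVert i)) P.length :=
    ⟨_, rfl⟩
  have hj : G.Adj u (P.getVert j) :=
    hjdef ▸ Nat.findGreatest_spec (P := fun i => G.Adj u (P.getVert i)) hL h01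
  have hjL : j ≤ P.length := hjdef ▸ Nat.findGreatest_le _
  have hjmax : ∀ i ≤ P.length, G.Adj u (P.getVert i) → i ≤ j :=
    fun i hi h => hjdef ▸ Nat.le_findGreatest hi h
  have hj2 : 2 ≤ j := by
    obtain ⟨x, hx, hx1⟩ := hdeg u _ h01
    obtain ⟨i, hiL, rfl⟩ := hP.exists_getVert_eq_of_adj_start hmax hx
    have := hjmax i hiL hx
    obtain _ | _ | i := i
    · simp at hx
    · exact absurd rfl hx1
    · omega
  have hjeven := hG.even_of_adj_start hP hj2 hjL hj
  exact ⟨u, P.getVert 1, P.getVert j, P.getVert 2, h01, hj, P.adj_getVert_succ (by omega),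
    by rw [Ne, hP.getVert_eq_getVert_iff hjL hL]; omega,
    fun x => hG.eq_of_adj_start hP hmax hjL hj hjmax hjeven,
    fun x => hG.eq_of_adj_getVert_one hP hmax hdeg hj2 hjL hj hjeven⟩

theorem two_mul_ncard_edgeSet_le_of_deleteEdges [Finite V] {s : Set (Sym2 V)} {T : Set V}
    (hs : s ⊆ G.edgeSet) (hT : T ⊂ G.support) (hTs : ∀ x ∈ T, ∀ y, G.Adj x y → s(x, y) ∈ s)
    (hsT : 2 * s.ncard ≤ 3 * T.ncard)
    (h : 2 * (G.deleteEdges s).edgeSet.ncard ≤ 3 * ((G.deleteEdges s).support.ncard - 1)) :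
    2 * G.edgeSet.ncard ≤ 3 * (G.support.ncard - 1) := by
  have hsupp : (G.deleteEdges s).support ⊆ G.support \ T := by
    intro x hx
    obtain ⟨y, hxy⟩ := (G.deleteEdges s).mem_support.mp hx
    rw [deleteEdges_adj] at hxy
    exact ⟨hxy.1.mem_support_left, fun hx => hxy.2 (hTs x hx y hxy.1)⟩
  have hE := Set.ncard_sdiff_add_ncard_of_subset hs
  have hV := Set.ncard_sdiff_add_ncard_of_subset hT.subset
  have hV' := Set.ncard_le_ncard hsupp
  have hTV := Set.ncard_lt_ncard hT
  rw [edgeSet_deleteEdges] at h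
  omega

theorem EvenCycleFree.two_mul_ncard_edgeSet_le [Finite V] (hG : G.EvenCycleFree) :
    2 * G.edgeSet.ncard ≤ 3 * (G.support.ncard - 1) := by
  induction hm : G.edgeSet.ncard using Nat.strong_induction_on generalizing G with
  | _ m ih =>
  subst hm
  have reduce (s : Set (Sym2 V)) (T : Set V) (hne : s.Nonempty) (hs : s ⊆ G.edgeSet)
      (hT : T ⊂ G.support) (hTs : ∀ x ∈ T, ∀ y, G.Adj x y → s(x, y) ∈ s)
      (hsT : 2 * s.ncard ≤ 3 * T.ncard) : 2 * G.edgeSet.ncard ≤ 3 * (G.support.ncard - 1) := by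
    refine two_mul_ncard_edgeSet_le_of_deleteEdges hs hT hTs hsT
      (ih _ ?_ (hG.anti (G.deleteEdges_le s)) rfl)
    have := Set.ncard_sdiff_add_ncard_of_subset hs
    have := (Set.ncard_pos (Set.toFinite s)).mpr hne
    rw [edgeSet_deleteEdges]
    omega
  rcases G.edgeSet.eq_empty_or_nonempty with hE | ⟨e, he⟩
  · simp [hE]
  induction e using Sym2.ind with | _ v w => ?_
  by_cases hleaf : ∃ v w, G.Adj v w ∧ ∀ x, G.Adj v x → x = w
  · obtain ⟨v, w, hvw, hv⟩ := hleaf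
    refine reduce {s(v, w)} {v} (by simp) (by simpa) ?_ ?_ (by simp)
    · exact (Set.ssubset_iff_of_subset (by simpa using hvw.mem_support_left)).mpr
        ⟨w, hvw.symm.mem_support_left, by simpa using hvw.ne.symm⟩
    · rintro x rfl y hxy
      simp [hv y hxy]
  · push Not at hleaf
    obtain ⟨v₀, v₁, a, b, h01, h0a, h1b, ha1, hv₀, hv₁⟩ :=
      hG.exists_adj_pair_of_forall_exists_adj_ne hleaf (G.mem_edgeSet.mp he)
    refine reduce {s(v₀, v₁), s(v₀, a), s(v₁, b)} {v₀, v₁} (by simp) ?_ ?_ ?_ ?_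
    · simp [Set.insert_subset_iff, h01, h0a, h1b]
    · refine (Set.ssubset_iff_of_subset ?_).mpr
        ⟨a, h0a.symm.mem_support_left, by simp [h0a.ne.symm, ha1]⟩
      simp [Set.insert_subset_iff, h01.mem_support_left, h01.symm.mem_support_left]
    · rintro x (rfl | rfl) y hxy
      · rcases hv₀ y hxy with rfl | rfl <;> simp
      · rcases hv₁ y hxy with rfl | rfl <;> simp [Sym2.eq_swap]
    · have := Set.ncard_insert_le (s(v₀, v₁)) {s(v₀, a), s(v₁, b)}
      have := Set.ncard_insert_le (s(v₀, a)) {s(v₁, b)}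
      rw [Set.ncard_singleton] at this
      rw [Set.ncard_pair h01.ne]
      omega

theorem two_mul_card_le_of_evenCycleFree [Fintype V] {R : Finset (Sym2 V)}
    (hR : ∀ e ∈ R, ¬ e.IsDiag) (h : (fromEdgeSet (R : Set (Sym2 V))).EvenCycleFree) :
    2 * R.card ≤ 3 * (Fintype.card V - 1) := by
  have hE : (fromEdgeSet (R : Set (Sym2 V))).edgeSet = R := by
    ext e
    simpa [edgeSet_fromEdgeSet] using hR e
  have hV := Set.ncard_le_ncard (Set.subset_univ (fromEdgeSet (R : Set (Sym2 V))).support)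
  have hbound := h.two_mul_ncard_edgeSet_le
  rw [hE, Set.ncard_coe_finset] at hbound
  rw [Set.ncard_univ, Nat.card_eq_fintype_card] at hV
  omega

end SimpleGraph

open SimpleGraph

theorem IsCycleEdgeSet.not_isDiag_s19 {V : Type*} [DecidableEq V] {C : Finset (Sym2 V)}
    (hC : IsCycleEdgeSet C) {e : Sym2 V} (he : e ∈ C) : ¬ e.IsDiag := by
  obtain ⟨v, c, -, rfl⟩ := hC
  exact (⊤ : SimpleGraph V).not_isDiag_of_mem_edgeSet (c.edges_subset_edgeSet (by simpa using he))

theorem exists_isCycleEdgeSet_subset_iff {V : Type*} [DecidableEq V] {R : Finset (Sym2 V)} :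
    (∃ C ⊆ R, IsCycleEdgeSet C ∧ Even C.card) ↔
      ¬ (fromEdgeSet (R : Set (Sym2 V))).EvenCycleFree := by
  constructor
  · rintro ⟨C, hCR, ⟨v, c, hc, rfl⟩, hCeven⟩ hfree
    have hcR : ∀ e ∈ c.edges, e ∈ (fromEdgeSet (R : Set (Sym2 V))).edgeSet := fun e he => by
      rw [edgeSet_fromEdgeSet]
      exact ⟨hCR (List.mem_toFinset.mpr he),
        (⊤ : SimpleGraph V).not_isDiag_of_mem_edgeSet (c.edges_subset_edgeSet he)⟩
    have := hfree _ (hc.transfer hcR)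
    rw [Walk.length_transfer, ← hc.isTrail.card_toFinset_edges] at this
    exact Nat.not_even_iff_odd.mpr this hCeven
  · intro h
    obtain ⟨v, c, hc, hodd⟩ : ∃ v, ∃ c : (fromEdgeSet (R : Set (Sym2 V))).Walk v v,
        c.IsCycle ∧ ¬ Odd c.length := by
      simpa [EvenCycleFree] using h
    refine ⟨c.edges.toFinset, fun e he => ?_, ⟨v, c.mapLe le_top, hc.mapLe le_top, by simp⟩, ?_⟩
    · have := c.edges_subset_edgeSet (List.mem_toFinset.mp he)
      rw [edgeSet_fromEdgeSet] at this
      exact this.1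
    · rwa [hc.isTrail.card_toFinset_edges, ← Nat.not_odd_iff_even]

theorem IsRainbow.mono {α ι : Type*} {F : ι → Finset α} {R R' : Finset α} (hR : IsRainbow F R)
    (h : R' ⊆ R) : IsRainbow F R' :=
  let ⟨σ, hσ, hσF⟩ := hR
  ⟨σ, hσ.mono (by simpa using h), fun e he => hσF e (h he)⟩

theorem IsRainbow.exists_forall_insert {α ι : Type*} [DecidableEq α] [Fintype ι]
    {F : ι → Finset α} {R : Finset α} (hR : IsRainbow F R) (hcard : R.card < Fintype.card ι) :
    ∃ i, ∀ e ∈ F i, IsRainbow F (insert e R) := by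
  classical
  obtain ⟨σ, hσ, hσF⟩ := hR
  obtain ⟨i, -, hi⟩ : ∃ i ∈ Finset.univ, i ∉ R.image σ :=
    Finset.exists_mem_notMem_of_card_lt_card (Finset.card_image_le.trans_lt hcard)
  refine ⟨i, fun e he => ?_⟩
  by_cases heR : e ∈ R
  · simpa [Finset.insert_eq_of_mem heR] using ⟨σ, hσ, hσF⟩
  have hupd : ∀ x ∈ R, Function.update σ e i x = σ x := fun x hx =>
    Function.update_of_ne (by rintro rfl; exact heR hx) _ _
  refine ⟨Function.update σ e i, ?_, fun x hx => ?_⟩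
  · rw [Finset.coe_insert, Set.injOn_insert (by simpa using heR)]
    refine ⟨fun x hx y hy hxy => hσ hx hy (by rwa [hupd x hx, hupd y hy] at hxy), ?_⟩
    rintro ⟨x, hx, hxe⟩
    rw [Function.update_self, hupd x hx] at hxe
    exact hi (Finset.mem_image.mpr ⟨x, hx, hxe⟩)
  · rcases Finset.mem_insert.mp hx with rfl | hx
    · simpa using he
    · simpa [hupd x hx] using hσF x hx

/-- Every family of `⌊3(n-1)/2⌋ + 1` even cycles in `K_n` has a rainbow even cycle. -/
theorem rainbow_even_cycle (n : ℕ)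
    (O : Fin (3 * (n - 1) / 2 + 1) → Finset (Sym2 (Fin n)))
    (hO : ∀ i, IsCycleEdgeSet (O i) ∧ Even (O i).card) :
    ∃ R : Finset (Sym2 (Fin n)), IsRainbow O R ∧ IsCycleEdgeSet R ∧ Even R.card := by
  classical
  let S := {R : Finset (Sym2 (Fin n)) | IsRainbow O R ∧
    (fromEdgeSet (R : Set (Sym2 (Fin n)))).EvenCycleFree}
  obtain ⟨R, ⟨hR, hRfree⟩, hRmax⟩ := S.toFinite.exists_maximalFor Finset.card S
    ⟨∅, ⟨fun _ => 0, by simp, by simp⟩, by simpa using evenCycleFree_bot⟩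
  have hcard : R.card < Fintype.card (Fin (3 * (n - 1) / 2 + 1)) := by
    obtain ⟨σ, -, hσ⟩ := hR
    have := two_mul_card_le_of_evenCycleFree
      (fun e he => (hO (σ e)).1.not_isDiag_s19 (hσ e he)) hRfree
    simp only [Fintype.card_fin] at this ⊢
    omega
  obtain ⟨i, hi⟩ := hR.exists_forall_insert hcard
  obtain ⟨e, heO, heR⟩ : ∃ e ∈ O i, e ∉ R := by
    by_contra! hOR
    exact exists_isCycleEdgeSet_subset_iff.mp ⟨O i, hOR, hO i⟩ hRfree
  have hgrow : ¬ (fromEdgeSet ((insert e R : Finset _) : Set (Sym2 (Fin n)))).EvenCycleFree :=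
    fun hfree => by
      have := hRmax ⟨hi e heO, hfree⟩ (Finset.card_le_card (Finset.subset_insert e R))
      rw [Finset.card_insert_of_notMem heR] at this
      omega
  obtain ⟨C, hCR, hC, hCeven⟩ := exists_isCycleEdgeSet_subset_iff.mpr hgrow
  exact ⟨C, (hi e heO).mono hCR, hC, hCeven⟩
end
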